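/- arXiv:1906.02228 — 13 statements merged into one kernel-verified Lean document; each statement's English description precedes it below -/
import Mathlib

section
/- For every integer k ≥ 1 and every natural number p, one has p^k = Σ_{j=0}^{k−1} A(k,j) · binom(j+p, k). -/
/-- The number of descents of a permutation `σ` of `Fin k`, i.e. the number of
(0-indexed) positions `i` with `i + 1 < k` and `σ i > σ (i + 1)`. -/
noncomputable def descentCount {k : ℕ} (σ : Equiv.Perm (Fin k)) : ℕ :=
  Nat.card {i : Fin k // ∃ h : (i : ℕ) + 1 < k, σ ⟨(i : ℕ) + 1, h⟩ < σ i}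

/-- The Eulerian number `A(k, j)`: the number of permutations of `{1, …, k}`
having exactly `j` descents. -/
noncomputable def eulerian (k j : ℕ) : ℕ :=
  Nat.card {σ : Equiv.Perm (Fin k) // descentCount σ = j}

/-!
Sort a word `f : [k] → [p]` increasingly, breaking ties by decreasing position, and let `σ` be
the sorting permutation. Then `f ∘ σ` is weakly increasing, and strictly increasing across every
ascent of `σ`. Adding to its `i`-th entry the number of descents of `σ` before `i` is a bijection
from such words onto the strictly increasing maps `[k] → [p + des σ]`, so the fibre over `σ` has
`binom (p + des σ) k` elements, and summing over `σ` gives Worpitzky's identity.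
-/

open Finset

theorem card_orderEmbedding_fin (k N : ℕ) : Nat.card (Fin k ↪o Fin N) = N.choose k := by
  rw [Nat.card_congr Set.powersetCard.ofFinEmbEquiv, Set.powersetCard.card,
    Nat.card_eq_fintype_card, Fintype.card_fin]

theorem Tuple.eq_sort_iff_strictMono {n : ℕ} {α : Type*} [LinearOrder α] {f : Fin n → α}
    (hf : Function.Injective f) {σ : Equiv.Perm (Fin n)} :
    σ = Tuple.sort f ↔ StrictMono (f ∘ σ) := by
  rw [Tuple.eq_sort_iff]
  refine ⟨fun h => h.1.strictMono_of_injective (hf.comp σ.injective), fun h => ?_⟩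
  exact ⟨h.monotone, fun i j hij heq => absurd heq (h hij).ne⟩

namespace Worpitzky

variable {n p : ℕ} {α : Type*}

def StrictMonoOff [Preorder α] (s : Finset (Fin n)) (b : Fin (n + 1) → α) : Prop :=
  ∀ i : Fin n, b i.castSucc ≤ b i.succ ∧ (i ∉ s → b i.castSucc < b i.succ)

theorem StrictMonoOff.monotone [Preorder α] {s : Finset (Fin n)} {b : Fin (n + 1) → α}
    (hb : StrictMonoOff s b) : Monotone b :=
  Fin.monotone_iff_le_succ.2 fun i => (hb i).1

def countBelow (s : Finset (Fin n)) (i : Fin (n + 1)) : ℕ :=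
  #{j ∈ s | j.castSucc < i}

section countBelow

variable (s : Finset (Fin n))

theorem countBelow_zero : countBelow s 0 = 0 := by
  simp [countBelow]

theorem countBelow_last : countBelow s (Fin.last n) = #s := by
  simp [countBelow, Fin.castSucc_lt_last]

theorem countBelow_le_card (i : Fin (n + 1)) : countBelow s i ≤ #s :=
  card_filter_le _ _

theorem countBelow_succ (i : Fin n) :
    countBelow s i.succ = countBelow s i.castSucc + if i ∈ s then 1 else 0 := by
  simp only [countBelow, card_filter, ← sum_ite_eq' s i (fun _ => 1), ← sum_add_distrib]
  refine sum_congr rfl fun j _ => ?_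
  simp only [Fin.castSucc_lt_succ_iff, Fin.castSucc_lt_castSucc_iff]
  split_ifs <;> grind

theorem strictMono_add_countBelow_iff {b : Fin (n + 1) → ℕ} :
    StrictMono (fun i => b i + countBelow s i) ↔ StrictMonoOff s b := by
  rw [Fin.strictMono_iff_lt_succ]
  refine forall_congr' fun i => ?_
  rw [countBelow_succ]
  by_cases hi : i ∈ s <;> simp only [hi, if_true, if_false, not_true, not_false_iff,
    false_imp_iff, true_imp_iff, and_true] <;> omega

theorem countBelow_le_of_strictMono {h : Fin (n + 1) → ℕ} (hh : StrictMono h)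
    (i : Fin (n + 1)) : countBelow s i ≤ h i := by
  induction i using Fin.induction with
  | zero => simp [countBelow_zero]
  | succ i ih =>
    have := hh i.castSucc_lt_succ
    rw [countBelow_succ]
    split_ifs <;> omega

theorem strictMonoOff_sub_countBelow {h : Fin (n + 1) → ℕ} (hh : StrictMono h) :
    StrictMonoOff s (fun i => h i - countBelow s i) := by
  rw [← strictMono_add_countBelow_iff]
  simpa [Nat.sub_add_cancel (countBelow_le_of_strictMono s hh _)]

theorem sub_countBelow_lt (h : Fin (n + 1) ↪o Fin (p + #s)) (i : Fin (n + 1)) :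
    h i - countBelow s i < p := by
  have h_le_last : (h i : ℕ) - countBelow s i ≤ h (Fin.last n) - #s := by
    simpa only [countBelow_last] using
      (strictMonoOff_sub_countBelow s h.strictMono).monotone (Fin.le_last i)
  have card_le_last := countBelow_le_of_strictMono s h.strictMono (Fin.last n)
  rw [countBelow_last] at card_le_last
  omega

def strictMonoOffEquiv :
    {b : Fin (n + 1) → Fin p // StrictMonoOff s b} ≃ (Fin (n + 1) ↪o Fin (p + #s)) where
  toFun b := OrderEmbedding.ofStrictMono
    (fun i => ⟨b.1 i + countBelow s i, by have := countBelow_le_card s i; omega⟩)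
    ((strictMono_add_countBelow_iff s).2 b.2)
  invFun h := ⟨fun i => ⟨h i - countBelow s i, sub_countBelow_lt s h i⟩,
    strictMonoOff_sub_countBelow s h.strictMono⟩
  left_inv b := Subtype.ext <| funext fun i => Fin.ext <| Nat.add_sub_cancel ..
  right_inv h := by
    ext i
    exact Nat.sub_add_cancel (countBelow_le_of_strictMono s h.strictMono i)

end countBelow

def descents (σ : Equiv.Perm (Fin (n + 1))) : Finset (Fin n) :=
  {i | σ i.succ < σ i.castSucc}

theorem descentCount_eq_card_descents (σ : Equiv.Perm (Fin (n + 1))) :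
    descentCount σ = #(descents σ) := by
  rw [descentCount, Nat.card_eq_fintype_card, Fintype.card_subtype,
    ← card_map (s := descents σ) Fin.castSuccEmb]
  congr 1
  ext i
  induction i using Fin.lastCases with
  | last => simp [descents]
  | cast j => simp [descents, Fin.succ]

theorem descentCount_lt (σ : Equiv.Perm (Fin (n + 1))) : descentCount σ < n + 1 := by
  rw [descentCount_eq_card_descents]
  exact Nat.lt_succ_of_le ((card_le_univ _).trans (Fintype.card_fin n).le)

theorem sum_comp_descentCount (g : ℕ → ℕ) :
    ∑ σ : Equiv.Perm (Fin (n + 1)), g (descentCount σ) =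
      ∑ j ∈ range (n + 1), eulerian (n + 1) j * g j := by
  rw [← sum_fiberwise_of_maps_to (g := descentCount) (t := range (n + 1))
    fun σ _ => mem_range.2 (descentCount_lt σ)]
  refine sum_congr rfl fun j _ => ?_
  rw [sum_congr rfl fun σ hσ => by rw [(mem_filter.1 hσ).2], sum_const, smul_eq_mul, eulerian,
    Nat.card_eq_fintype_card, Fintype.card_subtype]

/-- Ties are broken by decreasing position, so that `f ∘ sortPerm f` is constant across a step
only if that step is a descent of `sortPerm f`. -/
def sortPerm [LinearOrder α] (f : Fin n → α) : Equiv.Perm (Fin n) :=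
  Tuple.sort fun i => toLex (f i, OrderDual.toDual i)

theorem sortPerm_eq_iff [LinearOrder α] {f : Fin (n + 1) → α} {σ : Equiv.Perm (Fin (n + 1))} :
    sortPerm f = σ ↔ StrictMonoOff (descents σ) (f ∘ σ) := by
  rw [eq_comm, sortPerm, Tuple.eq_sort_iff_strictMono, Fin.strictMono_iff_lt_succ]
  · refine forall_congr' fun i => ?_
    simp only [Function.comp_apply, Prod.Lex.toLex_lt_toLex', OrderDual.toDual_lt_toDual,
      descents, mem_filter, mem_univ, true_and]
    grind
  · intro i j hij
    simpa using congrArg (fun x => OrderDual.ofDual (ofLex x).2) hij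

theorem card_sortPerm_fiber (σ : Equiv.Perm (Fin (n + 1))) :
    Nat.card {f : Fin (n + 1) → Fin p // sortPerm f = σ} =
      (p + #(descents σ)).choose (n + 1) := by
  rw [← card_orderEmbedding_fin]
  exact Nat.card_congr ((Equiv.subtypeEquiv (Equiv.arrowCongr σ.symm (Equiv.refl _))
    fun f => sortPerm_eq_iff).trans (strictMonoOffEquiv _))

end Worpitzky

open Worpitzky

/-- Worpitzky's identity: for `k ≥ 1` and every natural number `p`,
`p ^ k = ∑_{j=0}^{k-1} A(k, j) * binom (j + p) k`. -/
theorem eulerian_worpitzky (k : ℕ) (hk : 1 ≤ k) (p : ℕ) :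
    p ^ k = ∑ j ∈ Finset.range k, eulerian k j * Nat.choose (j + p) k := by
  obtain ⟨n, rfl⟩ : ∃ n, k = n + 1 := ⟨k - 1, by omega⟩
  calc p ^ (n + 1) = Nat.card (Fin (n + 1) → Fin p) := by simp
    _ = ∑ σ : Equiv.Perm (Fin (n + 1)),
          Nat.card {f : Fin (n + 1) → Fin p // sortPerm f = σ} := by
        rw [← Nat.card_sigma, Nat.card_congr (Equiv.sigmaFiberEquiv sortPerm)]
    _ = ∑ σ : Equiv.Perm (Fin (n + 1)), (descentCount σ + p).choose (n + 1) := by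
        simp only [card_sortPerm_fiber, descentCount_eq_card_descents, add_comm]
    _ = _ := sum_comp_descentCount fun j => (j + p).choose (n + 1)
end

section
/- Let σ be a 2-permutation of degree n, let L ⊆ {1,…,n} be nonempty, and let γ be an integer with min(L) ≤ γ ≤ max(L) − 1. If γ is a bounded cut of σ, then the integer γ^{|L} := |{1,…,γ} ∩ L| is a bounded cut of the restriction σ^{|L}. -/
/-- `σ` is a `k`-permutation of degree `n`: a word over the alphabet `{1, …, n}`
in which every value `i ∈ {1, …, n}` occurs exactly `k` times (and no other
letter occurs). -/
def IsMultiPerm (k n : ℕ) (σ : List ℕ) : Prop :=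
  ∀ i : ℕ, σ.count i = if 1 ≤ i ∧ i ≤ n then k else 0

/-- The restriction `σ^{|L}` of a multipermutation `σ` to a set `L` of values:
delete all letters whose value is not in `L`, and replace, for each `x`, the
`x`-th smallest element of `L` by `x`. -/
def restrict (σ : List ℕ) (L : Finset ℕ) : List ℕ :=
  (σ.filter fun x => decide (x ∈ L)).map fun x => (L.filter fun y => y ≤ x).card

/-- `γ` is a bounded cut of the `2`-permutation `σ` of degree `n`:
`1 ≤ γ ≤ n - 1` and `σ = f·μ·ν·l` where `f` and `l` are the first and last
letters of `σ` and `μ`, `ν` are words such that every letter of `μ` is at most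
`γ` and every letter of `ν` is greater than `γ`. -/
def IsBoundedCut (n : ℕ) (σ : List ℕ) (γ : ℕ) : Prop :=
  1 ≤ γ ∧ γ ≤ n - 1 ∧
    ∃ (f l : ℕ) (μ ν : List ℕ),
      σ = f :: (μ ++ ν ++ [l]) ∧ (∀ x ∈ μ, x ≤ γ) ∧ (∀ x ∈ ν, γ < x)

/-- A `2`-permutation of degree `n` is bounded cuttable if it has a bounded cut. -/
def BoundedCuttable (n : ℕ) (σ : List ℕ) : Prop :=
  ∃ γ, IsBoundedCut n σ γ

/-- A `2`-permutation of degree `n` is fully bounded cuttable if its restriction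
to every interval `{a, …, b} ⊆ {1, …, n}` with `a < b` is bounded cuttable. -/
def FullyBoundedCuttable (n : ℕ) (σ : List ℕ) : Prop :=
  ∀ a b : ℕ, 1 ≤ a → a < b → b ≤ n →
    BoundedCuttable (Finset.Icc a b).card (restrict σ (Finset.Icc a b))

private lemma map_shape (r : ℕ → ℕ) (M X : List ℕ) (h : M ≠ []) :
    (M ++ X).map r = r (M.head h) :: (M.tail.map r ++ X.map r) := by
  cases M with
  | nil => simp at h
  | cons a t => simp

/-- If `γ` is a bounded cut of a `2`-permutation `σ` of degree `n`, and
`L ⊆ {1, …, n}` is nonempty with `min L ≤ γ ≤ max L - 1`, then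
`γ^{|L} = |{1, …, γ} ∩ L|` is a bounded cut of the restriction `σ^{|L}`. -/
theorem isBoundedCut_restrict (n : ℕ) (hn : 1 ≤ n) (σ : List ℕ)
    (hσ : IsMultiPerm 2 n σ) (L : Finset ℕ) (hL : L.Nonempty)
    (hLsub : L ⊆ Finset.Icc 1 n) (γ : ℕ)
    (hγ₁ : L.min' hL ≤ γ) (hγ₂ : γ ≤ L.max' hL - 1)
    (hγ : IsBoundedCut n σ γ) :
    IsBoundedCut L.card (restrict σ L) ((Finset.Icc 1 γ ∩ L).card) := by
  obtain ⟨hγ1, hγn, f, l, μ, ν, hσeq, hμ, hν⟩ := hγ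
  have hmaxmem := L.max'_mem hL
  have hminmem := L.min'_mem hL
  have hmax1 : 1 ≤ L.max' hL := (Finset.mem_Icc.mp (hLsub hmaxmem)).1
  have hmin1 : 1 ≤ L.min' hL := (Finset.mem_Icc.mp (hLsub hminmem)).1
  have hγmax : γ < L.max' hL := by omega
  have rank_le : ∀ x ∈ L, x ≤ γ →
      (L.filter fun y => y ≤ x).card ≤ (Finset.Icc 1 γ ∩ L).card := by
    intro x hx hxγ
    apply Finset.card_le_card
    intro y hy
    simp only [Finset.mem_filter] at hy
    have h1 := (Finset.mem_Icc.mp (hLsub hy.1)).1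
    simp only [Finset.mem_inter, Finset.mem_Icc]
    exact ⟨⟨h1, le_trans hy.2 hxγ⟩, hy.1⟩
  have rank_gt : ∀ x ∈ L, γ < x →
      (Finset.Icc 1 γ ∩ L).card < (L.filter fun y => y ≤ x).card := by
    intro x hx hxγ
    apply Finset.card_lt_card
    constructor
    · intro y hy
      simp only [Finset.mem_inter, Finset.mem_Icc] at hy
      simp only [Finset.mem_filter]
      exact ⟨hy.2, le_of_lt (lt_of_le_of_lt hy.1.2 hxγ)⟩
    · intro hsub
      have := hsub (Finset.mem_filter.mpr ⟨hx, le_refl x⟩)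
      simp only [Finset.mem_inter, Finset.mem_Icc] at this
      omega
  refine ⟨?_, ?_, ?_⟩
  · have hmm : L.min' hL ∈ Finset.Icc 1 γ ∩ L := by
      simp only [Finset.mem_inter, Finset.mem_Icc]
      exact ⟨⟨hmin1, hγ₁⟩, hminmem⟩
    exact Finset.card_pos.mpr ⟨_, hmm⟩
  · have hlt : (Finset.Icc 1 γ ∩ L).card < L.card := by
      apply Finset.card_lt_card
      constructor
      · exact Finset.inter_subset_right
      · intro hsub
        have := hsub hmaxmem
        simp only [Finset.mem_inter, Finset.mem_Icc] at this
        omega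
    omega
  · -- main structural part
    have hrestrict : restrict σ L =
        ((f :: (μ ++ ν ++ [l])).filter fun x => decide (x ∈ L)).map
          fun x => (L.filter fun y => y ≤ x).card := by
      rw [restrict, hσeq]
    -- nonemptiness facts
    have hcountmax := hσ (L.max' hL)
    have hcountmin := hσ (L.min' hL)
    rw [if_pos (Finset.mem_Icc.mp (hLsub hmaxmem)), hσeq] at hcountmax
    rw [if_pos (Finset.mem_Icc.mp (hLsub hminmem)), hσeq] at hcountmin
    have hμ0max : μ.count (L.max' hL) = 0 := by
      rw [List.count_eq_zero]
      intro hm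
      exact absurd (hμ _ hm) (by omega)
    have hν0min : ν.count (L.min' hL) = 0 := by
      rw [List.count_eq_zero]
      intro hm
      exact absurd (hν _ hm) (by omega)
    have hmaxν : l ∉ L → L.max' hL ∈ ν := by
      intro hl
      have hlm : l ≠ L.max' hL := fun h => hl (h ▸ hmaxmem)
      rw [← List.count_pos_iff]
      simp only [List.count_cons, List.count_append, hμ0max, List.count_nil,
        beq_iff_eq] at hcountmax
      rw [if_neg hlm] at hcountmax
      split_ifs at hcountmax <;> omega
    have hminμ : f ∉ L → L.min' hL ∈ μ := by
      intro hf
      have hfm : f ≠ L.min' hL := fun h => hf (h ▸ hminmem)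
      rw [← List.count_pos_iff]
      simp only [List.count_cons, List.count_append, hν0min, List.count_nil,
        beq_iff_eq] at hcountmin
      rw [if_neg hfm] at hcountmin
      split_ifs at hcountmin <;> omega
    by_cases hf : f ∈ L <;> by_cases hl : l ∈ L
    · refine ⟨(L.filter fun y => y ≤ f).card, (L.filter fun y => y ≤ l).card,
        (μ.filter fun x => decide (x ∈ L)).map fun x => (L.filter fun y => y ≤ x).card,
        (ν.filter fun x => decide (x ∈ L)).map fun x => (L.filter fun y => y ≤ x).card,
        ?_, ?_, ?_⟩
      · rw [hrestrict]
        simp [List.filter_append, hf, hl]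
      · intro x hx
        simp only [List.mem_map, List.mem_filter, decide_eq_true_eq] at hx
        obtain ⟨y, ⟨hyμ, hyL⟩, rfl⟩ := hx
        exact rank_le y hyL (hμ y hyμ)
      · intro x hx
        simp only [List.mem_map, List.mem_filter, decide_eq_true_eq] at hx
        obtain ⟨y, ⟨hyν, hyL⟩, rfl⟩ := hx
        exact rank_gt y hyL (hν y hyν)
    · -- f ∈ L, l ∉ L
      have hVne : (ν.filter fun x => decide (x ∈ L)) ≠ [] := by
        intro h
        have := hmaxν hl
        have : L.max' hL ∈ ν.filter fun x => decide (x ∈ L) :=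
          List.mem_filter.mpr ⟨this, by simpa using hmaxmem⟩
        simp [h] at this
      set V := ν.filter fun x => decide (x ∈ L) with hV
      refine ⟨(L.filter fun y => y ≤ f).card,
        (L.filter fun y => y ≤ V.getLast hVne).card,
        (μ.filter fun x => decide (x ∈ L)).map fun x => (L.filter fun y => y ≤ x).card,
        V.dropLast.map fun x => (L.filter fun y => y ≤ x).card, ?_, ?_, ?_⟩
      · rw [hrestrict]
        rw [show (f :: (μ ++ ν ++ [l])).filter (fun x => decide (x ∈ L)) =
          f :: ((μ.filter fun x => decide (x ∈ L)) ++ (V.dropLast ++ [V.getLast hVne]))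
          from ?_]
        · simp
        · rw [List.dropLast_append_getLast hVne, hV]
          simp [List.filter_append, hf, hl]
      · intro x hx
        simp only [List.mem_map, List.mem_filter, decide_eq_true_eq] at hx
        obtain ⟨y, ⟨hyμ, hyL⟩, rfl⟩ := hx
        exact rank_le y hyL (hμ y hyμ)
      · intro x hx
        simp only [List.mem_map] at hx
        obtain ⟨y, hyD, rfl⟩ := hx
        have hyV : y ∈ V := (List.dropLast_sublist V).mem hyD
        have := List.mem_filter.mp hyV
        exact rank_gt y (by simpa using this.2) (hν y this.1)
    · -- f ∉ L, l ∈ L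
      have hMne : (μ.filter fun x => decide (x ∈ L)) ≠ [] := by
        intro h
        have := hminμ hf
        have : L.min' hL ∈ μ.filter fun x => decide (x ∈ L) :=
          List.mem_filter.mpr ⟨this, by simpa using hminmem⟩
        simp [h] at this
      set M := μ.filter fun x => decide (x ∈ L) with hM
      refine ⟨(L.filter fun y => y ≤ M.head hMne).card,
        (L.filter fun y => y ≤ l).card,
        M.tail.map fun x => (L.filter fun y => y ≤ x).card,
        (ν.filter fun x => decide (x ∈ L)).map fun x => (L.filter fun y => y ≤ x).card,
        ?_, ?_, ?_⟩
      · have hfe : (f :: (μ ++ ν ++ [l])).filter (fun x => decide (x ∈ L)) =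
            M ++ ((ν.filter fun x => decide (x ∈ L)) ++ [l]) := by
          rw [hM]; simp [List.filter_append, hf, hl]
        rw [hrestrict, hfe, map_shape _ _ _ hMne]
        simp
      · intro x hx
        simp only [List.mem_map] at hx
        obtain ⟨y, hyT, rfl⟩ := hx
        have hyM : y ∈ M := List.mem_of_mem_tail hyT
        have := List.mem_filter.mp hyM
        exact rank_le y (by simpa using this.2) (hμ y this.1)
      · intro x hx
        simp only [List.mem_map, List.mem_filter, decide_eq_true_eq] at hx
        obtain ⟨y, ⟨hyν, hyL⟩, rfl⟩ := hx
        exact rank_gt y hyL (hν y hyν)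
    · -- f ∉ L, l ∉ L
      have hMne : (μ.filter fun x => decide (x ∈ L)) ≠ [] := by
        intro h
        have := hminμ hf
        have : L.min' hL ∈ μ.filter fun x => decide (x ∈ L) :=
          List.mem_filter.mpr ⟨this, by simpa using hminmem⟩
        simp [h] at this
      have hVne : (ν.filter fun x => decide (x ∈ L)) ≠ [] := by
        intro h
        have := hmaxν hl
        have : L.max' hL ∈ ν.filter fun x => decide (x ∈ L) :=
          List.mem_filter.mpr ⟨this, by simpa using hmaxmem⟩
        simp [h] at this
      set M := μ.filter fun x => decide (x ∈ L) with hM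
      set V := ν.filter fun x => decide (x ∈ L) with hV
      refine ⟨(L.filter fun y => y ≤ M.head hMne).card,
        (L.filter fun y => y ≤ V.getLast hVne).card,
        M.tail.map fun x => (L.filter fun y => y ≤ x).card,
        V.dropLast.map fun x => (L.filter fun y => y ≤ x).card, ?_, ?_, ?_⟩
      · have hfe : (f :: (μ ++ ν ++ [l])).filter (fun x => decide (x ∈ L)) =
            M ++ (V.dropLast ++ [V.getLast hVne]) := by
          rw [List.dropLast_append_getLast hVne, hM, hV]
          simp [List.filter_append, hf, hl]
        rw [hrestrict, hfe, map_shape _ _ _ hMne]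
        simp
      · intro x hx
        simp only [List.mem_map] at hx
        obtain ⟨y, hyT, rfl⟩ := hx
        have hyM : y ∈ M := List.mem_of_mem_tail hyT
        have := List.mem_filter.mp hyM
        exact rank_le y (by simpa using this.2) (hμ y this.1)
      · intro x hx
        simp only [List.mem_map] at hx
        obtain ⟨y, hyD, rfl⟩ := hx
        have hyV : y ∈ V := (List.dropLast_sublist V).mem hyD
        have := List.mem_filter.mp hyV
        exact rank_gt y (by simpa using this.2) (hν y this.1)
end

section
/- For a 2-permutation σ of degree n, the following are equivalent: (i) for every interval {a,a+1,…,b} ⊆ {1,…,n} with a < b, the restriction σ^{|{a,…,b}} is bounded cuttable; (ii) for every subset L ⊆ {1,…,n} with |L| ≥ 2, the restriction σ^{|L} is bounded cuttable. -/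
/-!
If `L ⊆ {1, …, n}` has minimum `a` and maximum `b`, a bounded cut `γ` of `σ^{|{a,…,b}}` is a
value threshold `c = a + γ - 1` splitting the inner letters of `σ` filtered to `{a, …, b}`
into a low block followed by a high block. Every sublist of length at least 2 keeps this
shape, in particular `σ` filtered to `L` (where `a` occurs twice), and relabelling by ranks
in `L` is monotone, so `σ^{|L}` is cut at the rank of `c`, which lies strictly between `0`
and `|L|` because `a ≤ c < b`.
-/

theorem List.Sublist.of_cons_append_singleton {α : Type*} {g k f l : α} {t m : List α}
    (h : (g :: (t ++ [k])).Sublist (f :: (m ++ [l]))) : t.Sublist m := by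
  have h' : (k :: t.reverse).Sublist (l :: m.reverse) := by simpa using h.tail.reverse
  simpa using h'.tail

section CutsAt

variable {α β : Type*} [Preorder α] [Preorder β]

/-- The shape of a bounded cut at the threshold `c`, without the bounds on `c`. -/
def CutsAt (c : α) (w : List α) : Prop :=
  ∃ (f l : α) (μ ν : List α),
    w = f :: (μ ++ ν ++ [l]) ∧ (∀ x ∈ μ, x ≤ c) ∧ (∀ x ∈ ν, c < x)

theorem CutsAt.map {c : α} {d : β} {w : List α} {g : α → β} (h : CutsAt c w)
    (hle : ∀ x ∈ w, x ≤ c → g x ≤ d) (hlt : ∀ x ∈ w, c < x → d < g x) :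
    CutsAt d (w.map g) := by
  obtain ⟨f, l, μ, ν, rfl, hμ, hν⟩ := h
  refine ⟨g f, g l, μ.map g, ν.map g, by simp, ?_, ?_⟩
  · exact List.forall_mem_map.mpr fun x hx => hle x (by simp [hx]) (hμ x hx)
  · exact List.forall_mem_map.mpr fun x hx => hlt x (by simp [hx]) (hν x hx)

theorem CutsAt.of_sublist {c : α} {v w : List α} (h : CutsAt c w) (hvw : v.Sublist w)
    (hv : 2 ≤ v.length) : CutsAt c v := by
  obtain ⟨f, l, μ, ν, rfl, hμ, hν⟩ := h
  obtain ⟨g, t, k, rfl⟩ : ∃ g t k, v = g :: (t ++ [k]) := by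
    match v, hv with
    | g :: v', hv =>
      obtain rfl | ⟨t, k, rfl⟩ := v'.eq_nil_or_concat
      · simp at hv
      · exact ⟨g, t, k, by simp⟩
  obtain ⟨A, B, rfl, hA, hB⟩ := List.sublist_append_iff.mp hvw.of_cons_append_singleton
  exact ⟨g, k, A, B, rfl, fun x hx => hμ x (hA.subset hx), fun x hx => hν x (hB.subset hx)⟩

end CutsAt

theorem IsMultiPerm.le_length_filter {k n a : ℕ} {σ : List ℕ} {p : ℕ → Bool}
    (hσ : IsMultiPerm k n σ) (ha : a ∈ Finset.Icc 1 n) (hpa : p a) : k ≤ (σ.filter p).length := by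
  have hcount := hσ a
  rw [if_pos (Finset.mem_Icc.mp ha)] at hcount
  exact hcount ▸ List.count_filter hpa ▸ List.count_le_length

theorem card_filter_le_Icc {a b x : ℕ} (hxb : x ≤ b) :
    ((Finset.Icc a b).filter fun y => y ≤ x).card = x + 1 - a := by
  rw [show (Finset.Icc a b).filter (· ≤ x) = Finset.Icc a x by
    ext y; simp only [Finset.mem_filter, Finset.mem_Icc]; omega, Nat.card_Icc]

theorem map_restrict_Icc (σ : List ℕ) {a b : ℕ} (ha : 1 ≤ a) :
    (restrict σ (Finset.Icc a b)).map (· + (a - 1)) = σ.filter (· ∈ Finset.Icc a b) := by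
  rw [restrict, List.map_map]
  conv_rhs => rw [← List.map_id (σ.filter _)]
  refine List.map_congr_left fun x hx => ?_
  obtain ⟨hax, hxb⟩ := Finset.mem_Icc.mp (by simpa using (List.mem_filter.mp hx).2)
  simp only [Function.comp_apply, card_filter_le_Icc hxb, id]
  omega

theorem IsBoundedCut.cutsAt_filter_Icc {σ : List ℕ} {a b γ : ℕ} (ha : 1 ≤ a)
    (h : IsBoundedCut (Finset.Icc a b).card (restrict σ (Finset.Icc a b)) γ) :
    CutsAt (γ + (a - 1)) (σ.filter (· ∈ Finset.Icc a b)) := by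
  have hcut : CutsAt γ (restrict σ (Finset.Icc a b)) := h.2.2
  rw [← map_restrict_Icc σ ha]
  exact hcut.map (fun _ _ _ => by omega) (fun _ _ _ => by omega)

theorem boundedCuttable_restrict_of_cutsAt {σ : List ℕ} {L : Finset ℕ} {a b c : ℕ}
    (hcut : CutsAt c (σ.filter (· ∈ L))) (ha : a ∈ L) (hac : a ≤ c) (hb : b ∈ L)
    (hcb : c < b) : BoundedCuttable L.card (restrict σ L) := by
  refine ⟨(L.filter (· ≤ c)).card, Finset.card_pos.mpr ⟨a, by simp [ha, hac]⟩, ?_, hcut.map ?_ ?_⟩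
  · have := Finset.card_lt_card
      (Finset.filter_ssubset.mpr ⟨b, hb, by omega⟩ : L.filter (· ≤ c) ⊂ L)
    omega
  · exact fun x _ hxc =>
      Finset.card_le_card (Finset.monotone_filter_right _ fun y _ hy => hy.trans hxc)
  · intro x hx hcx
    refine Finset.card_lt_card
      ⟨Finset.monotone_filter_right _ fun y _ hy => by omega, fun hsub => ?_⟩
    have hxL : x ∈ L := by simpa using (List.mem_filter.mp hx).2
    have := (Finset.mem_filter.mp (hsub (Finset.mem_filter.mpr ⟨hxL, le_rfl⟩))).2
    omega

theorem boundedCuttable_restrict_of_subset_Icc {σ : List ℕ} {L : Finset ℕ} {a b : ℕ}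
    (ha1 : 1 ≤ a) (ha : a ∈ L) (hb : b ∈ L) (hLab : L ⊆ Finset.Icc a b)
    (hlen : 2 ≤ (σ.filter (· ∈ L)).length)
    (hcut : BoundedCuttable (Finset.Icc a b).card (restrict σ (Finset.Icc a b))) :
    BoundedCuttable L.card (restrict σ L) := by
  obtain ⟨γ, hγ⟩ := hcut
  have hsub : (σ.filter (· ∈ L)).Sublist (σ.filter (· ∈ Finset.Icc a b)) :=
    List.monotone_filter_right σ fun x hx => by simpa using hLab (by simpa using hx)
  have hγ1 := hγ.1
  have hγb := hγ.2.1
  rw [Nat.card_Icc] at hγb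
  exact boundedCuttable_restrict_of_cutsAt ((hγ.cutsAt_filter_Icc ha1).of_sublist hsub hlen)
    ha (by omega) hb (by omega)

theorem fullyBoundedCuttable_iff_general (n : ℕ) (σ : List ℕ)
    (hσ : IsMultiPerm 2 n σ) :
    FullyBoundedCuttable n σ ↔
      ∀ L : Finset ℕ, L ⊆ Finset.Icc 1 n → 2 ≤ L.card →
        BoundedCuttable L.card (restrict σ L) := by
  refine ⟨fun hF L hL hcard => ?_,
    fun h a b ha hab hbn => h _ (Finset.Icc_subset_Icc ha hbn) (by rw [Nat.card_Icc]; omega)⟩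
  have hne : L.Nonempty := Finset.card_pos.mp (by omega)
  have hab : L.min' hne < L.max' hne := L.min'_lt_max'_of_card (by omega)
  have haL := L.min'_mem hne
  have hbL := L.max'_mem hne
  have ha1 : 1 ≤ L.min' hne := (Finset.mem_Icc.mp (hL haL)).1
  have hLab : L ⊆ Finset.Icc (L.min' hne) (L.max' hne) := fun x hx =>
    Finset.mem_Icc.mpr ⟨L.min'_le x hx, L.le_max' x hx⟩
  exact boundedCuttable_restrict_of_subset_Icc ha1 haL hbL hLab
    (hσ.le_length_filter (hL haL) (by simpa using haL))
    (hF _ _ ha1 hab (Finset.mem_Icc.mp (hL hbL)).2)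

/-- For a `2`-permutation `σ` of degree `n`, the following are equivalent:
(i) the restriction of `σ` to every interval `{a, …, b} ⊆ {1, …, n}` with
`a < b` is bounded cuttable (i.e. `σ` is fully bounded cuttable);
(ii) the restriction of `σ` to every subset `L ⊆ {1, …, n}` with `|L| ≥ 2`
is bounded cuttable. -/
theorem fullyBoundedCuttable_iff (n : ℕ) (hn : 1 ≤ n) (σ : List ℕ)
    (hσ : IsMultiPerm 2 n σ) :
    FullyBoundedCuttable n σ ↔
      ∀ L : Finset ℕ, L ⊆ Finset.Icc 1 n → 2 ≤ L.card →
        BoundedCuttable L.card (restrict σ L) :=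
  fullyBoundedCuttable_iff_general n σ hσ
end

section
/- The set of fully bounded cuttable 2-permutations is a 2-permutation class: for every fully bounded cuttable 2-permutation σ of degree n and every nonempty subset L ⊆ {1,…,n}, the restriction σ^{|L} is fully bounded cuttable. -/
/-!
Restricting `σ^{|K}` further to `M` is the single restriction of `σ` to the elements of `K`
whose rank in `K` lies in `M`. Hence every interval restriction of `σ^{|L}` is of the form
`σ^{|L'}` with `L' ⊆ L` and `#L' ≥ 2`, and `σ^{|L'}` is in turn a restriction of the interval
restriction `σ^{|[min L', max L']}`, which has a bounded cut `γ`. A bounded cut says only that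
among the inner letters (all but the first and last) every letter above `γ` precedes no letter
at most `γ`; this survives deleting letters and relabelling them monotonically. As the smallest
and largest values of the interval are kept, the rank of `γ` is a bounded cut of `σ^{|L'}`.
-/

open Finset

def rankIn (K : Finset ℕ) (x : ℕ) : ℕ := #{y ∈ K | y ≤ x}

section rankIn

variable {K : Finset ℕ}

lemma restrict_eq_map_rankIn (σ : List ℕ) (L : Finset ℕ) :
    restrict σ L = (σ.filter (· ∈ L)).map (rankIn L) := rfl

lemma monotone_rankIn (K : Finset ℕ) : Monotone (rankIn K) := fun _ _ hxy =>
  card_le_card fun _ hz => mem_filter.2 ⟨(mem_filter.1 hz).1, (mem_filter.1 hz).2.trans hxy⟩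

lemma rankIn_lt_rankIn {x y : ℕ} (hxy : x < y) (hy : y ∈ K) : rankIn K x < rankIn K y := by
  refine card_lt_card ⟨fun z hz => ?_, fun hsub => ?_⟩
  · exact mem_filter.2 ⟨(mem_filter.1 hz).1, (mem_filter.1 hz).2.trans hxy.le⟩
  · have := (mem_filter.1 (hsub (mem_filter.2 ⟨hy, le_rfl⟩))).2
    omega

lemma strictMonoOn_rankIn (K : Finset ℕ) : StrictMonoOn (rankIn K) K :=
  fun _ _ _ hy hxy => rankIn_lt_rankIn hxy hy

lemma one_le_rankIn {x : ℕ} (hx : x ∈ K) : 1 ≤ rankIn K x :=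
  card_pos.2 ⟨x, mem_filter.2 ⟨hx, le_rfl⟩⟩

lemma rankIn_le_card (K : Finset ℕ) (x : ℕ) : rankIn K x ≤ #K :=
  card_le_card (filter_subset _ _)

lemma rankIn_Icc (a b x : ℕ) : rankIn (Icc a b) x = min x b + 1 - a := by
  rw [rankIn, ← Nat.card_Icc]
  congr 1
  ext y
  simp only [mem_filter, mem_Icc]
  omega

lemma image_rankIn (K : Finset ℕ) : K.image (rankIn K) = Icc 1 #K := by
  refine eq_of_subset_of_card_le (fun c hc => ?_) ?_
  · obtain ⟨x, hx, rfl⟩ := mem_image.1 hc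
    exact mem_Icc.2 ⟨one_le_rankIn hx, rankIn_le_card K x⟩
  · rw [Nat.card_Icc, card_image_of_injOn (strictMonoOn_rankIn K).injOn]
    omega

lemma rankIn_image {f : ℕ → ℕ} {S : Finset ℕ} {x : ℕ}
    (hf : StrictMonoOn f (insert x (S : Set ℕ))) : rankIn (S.image f) (f x) = rankIn S x := by
  rw [rankIn, filter_image, rankIn, card_image_of_injOn (hf.injOn.mono fun y hy =>
    Set.mem_insert_of_mem x (mem_filter.1 hy).1)]
  exact congrArg card <| filter_congr fun y hy =>
    hf.le_iff_le (Set.mem_insert_of_mem x hy) (Set.mem_insert x _)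

lemma image_filter_rankIn_mem {M : Finset ℕ} (hM : M ⊆ K.image (rankIn K)) :
    {x ∈ K | rankIn K x ∈ M}.image (rankIn K) = M := by
  refine (filter_image (p := (· ∈ M))).symm.trans ?_
  ext c
  simpa only [mem_filter, and_iff_right_iff_imp] using @hM c

lemma filter_rankIn_mem_image {L : Finset ℕ} (hLK : L ⊆ K) :
    {x ∈ K | rankIn K x ∈ L.image (rankIn K)} = L := by
  ext x
  simp only [mem_filter, mem_image]
  constructor
  · rintro ⟨hxK, y, hyL, hyx⟩
    rwa [← (strictMonoOn_rankIn K).injOn (hLK hyL) hxK hyx]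
  · exact fun hx => ⟨hLK hx, x, hx, rfl⟩

end rankIn

lemma restrict_restrict (σ : List ℕ) {K M : Finset ℕ} (hM : M ⊆ K.image (rankIn K)) :
    restrict (restrict σ K) M = restrict σ {x ∈ K | rankIn K x ∈ M} := by
  simp only [restrict_eq_map_rankIn, List.filter_map, List.map_map, List.filter_filter]
  rw [List.filter_congr (q := (· ∈ {x ∈ K | rankIn K x ∈ M})) fun x _ => by
    simp [Bool.and_comm]]
  refine List.map_congr_left fun x hx => ?_
  have hxK : x ∈ K := (mem_filter.1 (of_decide_eq_true (List.mem_filter.1 hx).2)).1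
  conv_lhs => rw [← image_filter_rankIn_mem hM]
  exact rankIn_image <| (strictMonoOn_rankIn K).mono <|
    Set.insert_subset hxK fun y hy => (mem_filter.1 hy).1

theorem List.Sublist.dropLast {α : Type*} {l₁ l₂ : List α} (h : List.Sublist l₁ l₂) :
    List.Sublist l₁.dropLast l₂.dropLast := by
  simpa using h.reverse.tail.reverse

lemma exists_append_le_lt_iff_pairwise {γ : ℕ} {w : List ℕ} :
    (∃ μ ν : List ℕ, w = μ ++ ν ∧ (∀ x ∈ μ, x ≤ γ) ∧ ∀ x ∈ ν, γ < x) ↔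
      w.Pairwise fun x y => γ < x → γ < y := by
  constructor
  · rintro ⟨μ, ν, rfl, hμ, hν⟩
    refine List.pairwise_append.2 ⟨?_, ?_, fun _ _ y hy _ => hν y hy⟩
    · exact List.pairwise_of_forall_mem_list fun x hx _ _ hγx => absurd (hμ x hx) (by omega)
    · exact List.pairwise_of_forall_mem_list fun _ _ y hy _ => hν y hy
  · induction w with
    | nil => exact fun _ => ⟨[], [], rfl, by simp, by simp⟩
    | cons a t ih =>
      rw [List.pairwise_cons]
      rintro ⟨ha, ht⟩
      by_cases hγa : γ < a
      · refine ⟨[], a :: t, rfl, by simp, ?_⟩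
        simpa [hγa] using fun x hx => ha x hx hγa
      · obtain ⟨μ, ν, rfl, hμ, hν⟩ := ih ht
        refine ⟨a :: μ, ν, rfl, ?_, hν⟩
        simpa [Nat.le_of_not_lt hγa] using hμ

lemma exists_eq_cons_append_singleton_iff {α : Type*} {σ : List α} {p : List α → Prop} :
    (∃ f l w, σ = f :: (w ++ [l]) ∧ p w) ↔ 2 ≤ σ.length ∧ p σ.tail.dropLast := by
  constructor
  · rintro ⟨f, l, w, rfl, hw⟩
    simpa using hw
  · rintro ⟨hlen, hp⟩
    match σ, hlen with
    | f :: t, hlen =>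
      have ht : t ≠ [] := by rintro rfl; simp at hlen
      exact ⟨f, t.getLast ht, t.dropLast, by rw [t.dropLast_append_getLast ht], hp⟩

lemma isBoundedCut_iff {n γ : ℕ} {σ : List ℕ} :
    IsBoundedCut n σ γ ↔ 1 ≤ γ ∧ γ ≤ n - 1 ∧ 2 ≤ σ.length ∧
      σ.tail.dropLast.Pairwise fun x y => γ < x → γ < y := by
  rw [IsBoundedCut, ← exists_append_le_lt_iff_pairwise]
  refine and_congr_right fun _ => and_congr_right fun _ => Iff.trans ⟨?_, ?_⟩
    (exists_eq_cons_append_singleton_iff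
      (p := fun w => ∃ μ ν : List ℕ, w = μ ++ ν ∧ (∀ x ∈ μ, x ≤ γ) ∧ ∀ x ∈ ν, γ < x))
  · rintro ⟨f, l, μ, ν, rfl, hμ, hν⟩
    exact ⟨f, l, μ ++ ν, rfl, μ, ν, rfl, hμ, hν⟩
  · rintro ⟨f, l, _, rfl, μ, ν, rfl, hμ, hν⟩
    exact ⟨f, l, μ, ν, rfl, hμ, hν⟩

lemma IsBoundedCut.restrict {m γ : ℕ} {τ : List ℕ} {M : Finset ℕ} (hcut : IsBoundedCut m τ γ)
    (h1 : 1 ∈ M) (hm : m ∈ M) (hlen : 2 ≤ (restrict τ M).length) :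
    IsBoundedCut #M (restrict τ M) (rankIn M γ) := by
  obtain ⟨hγ1, hγm, -, hpair⟩ := isBoundedCut_iff.1 hcut
  refine isBoundedCut_iff.2 ⟨(one_le_rankIn h1).trans (monotone_rankIn M hγ1), ?_, hlen, ?_⟩
  · have := rankIn_lt_rankIn (show γ < m by omega) hm
    have := rankIn_le_card M m
    omega
  · rw [restrict_eq_map_rankIn, ← List.map_tail, ← List.map_dropLast, List.pairwise_map]
    refine (hpair.sublist (List.filter_sublist.tail).dropLast).imp_of_mem
      fun {x y} _ hy hxy hγx => rankIn_lt_rankIn (hxy ((monotone_rankIn M).reflect_lt hγx)) ?_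
    have hy' := (List.tail_sublist _).subset ((List.dropLast_sublist _).subset hy)
    simpa using (List.mem_filter.1 hy').2

lemma FullyBoundedCuttable.boundedCuttable_restrict {n : ℕ} {σ : List ℕ}
    (hσ : IsMultiPerm 2 n σ) (hfull : FullyBoundedCuttable n σ) {L : Finset ℕ}
    (hL : L ⊆ Icc 1 n) (hcard : 2 ≤ #L) : BoundedCuttable #L (restrict σ L) := by
  have hne : L.Nonempty := card_pos.1 (by omega)
  set a := L.min' hne
  set b := L.max' hne
  have ha : a ∈ L := L.min'_mem hne
  have hb : b ∈ L := L.max'_mem hne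
  have hLK : L ⊆ Icc a b := fun x hx => mem_Icc.2 ⟨L.min'_le x hx, L.le_max' x hx⟩
  have hab : a < b := L.min'_lt_max'_of_card hcard
  obtain ⟨γ, hγ⟩ := hfull a b (mem_Icc.1 (hL ha)).1 hab (mem_Icc.1 (hL hb)).2
  set M := L.image (rankIn (Icc a b))
  have hrestrict : restrict σ L = restrict (restrict σ (Icc a b)) M := by
    rw [restrict_restrict σ (image_subset_image hLK), filter_rankIn_mem_image hLK]
  have hlen : 2 ≤ (restrict σ L).length :=
    calc 2 = σ.count a := by rw [hσ a, if_pos (mem_Icc.1 (hL ha))]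
      _ = (σ.filter (· ∈ L)).count a := (List.count_filter (by simpa using ha)).symm
      _ ≤ (σ.filter (· ∈ L)).length := List.count_le_length
      _ = (restrict σ L).length := (List.length_map _).symm
  have hcardM : #M = #L := card_image_of_injOn ((strictMonoOn_rankIn _).mono hLK).injOn
  have h1 : 1 ∈ M := mem_image.2 ⟨a, ha, by rw [rankIn_Icc]; omega⟩
  have hbM : #(Icc a b) ∈ M := mem_image.2 ⟨b, hb, by rw [rankIn_Icc, Nat.card_Icc]; omega⟩
  rw [hrestrict, ← hcardM]
  exact ⟨_, hγ.restrict h1 hbM (hrestrict ▸ hlen)⟩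

theorem fullyBoundedCuttable_restrict_general (n : ℕ) (σ : List ℕ)
    (hσ : IsMultiPerm 2 n σ) (hfull : FullyBoundedCuttable n σ)
    (L : Finset ℕ) (hLsub : L ⊆ Finset.Icc 1 n) :
    FullyBoundedCuttable L.card (restrict σ L) := by
  intro a b ha hab hb
  have hI : Icc a b ⊆ L.image (rankIn L) := image_rankIn L ▸ Icc_subset_Icc ha hb
  set L' := {x ∈ L | rankIn L x ∈ Icc a b}
  have hcard : #L' = #(Icc a b) :=
    calc #L' = #(L'.image (rankIn L)) :=
          (card_image_of_injOn ((strictMonoOn_rankIn L).mono (filter_subset _ _)).injOn).symm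
      _ = #(Icc a b) := by rw [image_filter_rankIn_mem hI]
  rw [restrict_restrict σ hI, ← hcard]
  exact hfull.boundedCuttable_restrict hσ ((filter_subset _ _).trans hLsub)
    (by rw [hcard, Nat.card_Icc]; omega)

/-- The set of fully bounded cuttable `2`-permutations is a `2`-permutation
class: any restriction of a fully bounded cuttable `2`-permutation is fully
bounded cuttable. -/
theorem fullyBoundedCuttable_restrict (n : ℕ) (hn : 1 ≤ n) (σ : List ℕ)
    (hσ : IsMultiPerm 2 n σ) (hfull : FullyBoundedCuttable n σ)
    (L : Finset ℕ) (hL : L.Nonempty) (hLsub : L ⊆ Finset.Icc 1 n) :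
    FullyBoundedCuttable L.card (restrict σ L) :=
  fullyBoundedCuttable_restrict_general n σ hσ hfull L hLsub
end

section
/- Let σ be a fully bounded cuttable 2-permutation of degree n, let i ∈ {1,…,n}, and let p < q be the two positions with σ(p) = σ(q) = i. Then there are no positions s, t with p < s < t < q such that σ(s) > i and σ(t) < i; in other words, the factor of σ strictly between the two occurrences of i is a concatenation μ·ν in which every letter of μ is smaller than i and every letter of ν is larger than i. -/
open scoped List

/-!
Let `j = σ(s) > i` and `k = σ(t) < i`, and restrict `σ` to the interval `{k, …, j}`.
There `j` becomes the largest letter and `k` becomes `1`, and the occurrences of `i`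
at `p` and `q` survive, so the restricted word contains the pattern `i · max · 1 · i`.
The letters `max` and `1` therefore lie strictly inside the word, i.e. in `μ ++ ν` for
any bounded cut `γ`; but `max > γ` forces it into `ν` and `1 ≤ γ` forces `1` into `μ`,
which contradicts `max` preceding `1`.
-/

theorem IsMultiPerm.mem_Icc_of_mem {k n : ℕ} {σ : List ℕ} (hσ : IsMultiPerm k n σ) {x : ℕ}
    (hx : x ∈ σ) : x ∈ Set.Icc 1 n := by
  by_contra h
  rw [Set.mem_Icc] at h
  have hcount := hσ x
  rw [if_neg h, List.count_eq_zero] at hcount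
  exact hcount hx

theorem IsBoundedCut.le_or_lt_of_sublist {N γ a x y b : ℕ} {w : List ℕ}
    (hγ : IsBoundedCut N w γ) (hsub : [a, x, y, b] <+ w) : x ≤ γ ∨ γ < y := by
  obtain ⟨-, -, f, l, μ, ν, rfl, hμ, hν⟩ := hγ
  have hinner : [x, y] <+ μ ++ ν := by
    have hdrop_first : [x, y, b] <+ μ ++ ν ++ [l] := hsub.tail
    have hdrop_last : [y, x] <+ (μ ++ ν).reverse := by
      simpa using (List.reverse_sublist.2 hdrop_first).tail
    simpa using List.reverse_sublist.2 hdrop_last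
  have hpairwise : (μ ++ ν).Pairwise fun u v => u ≤ γ ∨ γ < v :=
    List.pairwise_append.2
      ⟨List.pairwise_of_forall_mem_list fun u hu _ _ => Or.inl (hμ u hu),
        List.pairwise_of_forall_mem_list fun _ _ v hv => Or.inr (hν v hv),
        fun u hu _ _ => Or.inl (hμ u hu)⟩
  simpa using hpairwise.sublist hinner

theorem List.Sublist.map_sublist_restrict {l σ : List ℕ} {L : Finset ℕ} (h : l <+ σ)
    (hL : ∀ x ∈ l, x ∈ L) :
    l.map (fun x => (L.filter fun y => y ≤ x).card) <+ restrict σ L := by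
  have hfilter : l.filter (fun x => decide (x ∈ L)) = l :=
    List.filter_eq_self.2 fun x hx => decide_eq_true (hL x hx)
  exact List.Sublist.map _ (hfilter ▸ h.filter _)

theorem Nat.card_Icc_filter_le {k j x : ℕ} (hxj : x ≤ j) :
    ((Finset.Icc k j).filter fun y => y ≤ x).card = x + 1 - k := by
  have : (Finset.Icc k j).filter (fun y => y ≤ x) = Finset.Icc k x := by
    ext y
    simp only [Finset.mem_filter, Finset.mem_Icc]
    omega
  rw [this, Nat.card_Icc]

theorem fullyBoundedCuttable_between_occurrences_general (n : ℕ)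
    (σ : List ℕ) (hσ : IsMultiPerm 2 n σ) (hfull : FullyBoundedCuttable n σ)
    (i : ℕ)
    (p q : Fin σ.length) (hp : σ.get p = i) (hq : σ.get q = i) :
    ¬ ∃ s t : Fin σ.length,
        p < s ∧ s < t ∧ t < q ∧ i < σ.get s ∧ σ.get t < i := by
  rintro ⟨s, t, hps, hst, htq, hs, ht⟩
  have hpattern : [σ.get p, σ.get s, σ.get t, σ.get q] <+ σ := by
    have hsorted : [p, s, t, q].Pairwise (· < ·) :=
      List.isChain_iff_pairwise.1 (by simp [hps, hst, htq])
    simpa using List.map_getElem_sublist hsorted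
  have hk := hσ.mem_Icc_of_mem (List.get_mem σ t)
  have hj := hσ.mem_Icc_of_mem (List.get_mem σ s)
  rw [hp, hq] at hpattern
  generalize σ.get s = j at *
  generalize σ.get t = k at *
  obtain ⟨γ, hγ⟩ := hfull k j hk.1 (ht.trans hs) hj.2
  have hinterval : ∀ x ∈ [i, j, k, i], x ∈ Finset.Icc k j := by
    simp only [List.forall_mem_cons, Finset.mem_Icc]
    exact ⟨by omega, by omega, by omega, by omega, List.forall_mem_nil _⟩
  have hrestricted := hγ.le_or_lt_of_sublist (hpattern.map_sublist_restrict hinterval)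
  beta_reduce at hrestricted
  rw [Nat.card_Icc_filter_le le_rfl, Nat.card_Icc_filter_le (by omega)] at hrestricted
  obtain ⟨hγ₁, hγ₂, -⟩ := hγ
  rw [Nat.card_Icc] at hγ₂
  omega

/-- Let `σ` be a fully bounded cuttable `2`-permutation of degree `n`, let
`i ∈ {1, …, n}`, and let `p < q` be the two positions with
`σ(p) = σ(q) = i`. Then there are no positions `s, t` with `p < s < t < q`,
`σ(s) > i` and `σ(t) < i`: the factor of `σ` strictly between the two
occurrences of `i` is a concatenation `μ·ν` with every letter of `μ` smaller
than `i` and every letter of `ν` larger than `i`. -/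
theorem fullyBoundedCuttable_between_occurrences (n : ℕ) (hn : 1 ≤ n)
    (σ : List ℕ) (hσ : IsMultiPerm 2 n σ) (hfull : FullyBoundedCuttable n σ)
    (i : ℕ) (hi₁ : 1 ≤ i) (hi₂ : i ≤ n)
    (p q : Fin σ.length) (hpq : p < q) (hp : σ.get p = i) (hq : σ.get q = i) :
    ¬ ∃ s t : Fin σ.length,
        p < s ∧ s < t ∧ t < q ∧ i < σ.get s ∧ σ.get t < i :=
  fullyBoundedCuttable_between_occurrences_general n σ hσ hfull i p q hp hq
end

section
/- A 1-permutation σ (that is, an ordinary permutation of {1,…,n} written as a word) is fully 1-rooted cuttable if and only if it avoids the pattern 231; that is, if and only if there exist no positions p < q < r with σ(r) < σ(p) < σ(q). -/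
/-- `γ` is a `k`-rooted cut of the `k`-permutation `σ` of degree `n`:
`1 ≤ γ ≤ n - 1` and `σ = μ·ν·ω` where `μ` consists of the first `k` letters of
`σ` and `ν`, `ω` are words such that every letter of `ν` is at most `γ` and
every letter of `ω` is greater than `γ`. -/
def IsKRootedCut (k n : ℕ) (σ : List ℕ) (γ : ℕ) : Prop :=
  1 ≤ γ ∧ γ ≤ n - 1 ∧
    ∃ μ ν ω : List ℕ,
      σ = μ ++ ν ++ ω ∧ μ.length = k ∧ (∀ x ∈ ν, x ≤ γ) ∧ (∀ x ∈ ω, γ < x)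

/-- A `k`-permutation of degree `n` is `k`-rooted cuttable if it has a
`k`-rooted cut. -/
def KRootedCuttable (k n : ℕ) (σ : List ℕ) : Prop :=
  ∃ γ, IsKRootedCut k n σ γ

/-- A `k`-permutation of degree `n` is fully `k`-rooted cuttable if its
restriction to every interval `{a, …, b} ⊆ {1, …, n}` with `a < b` is
`k`-rooted cuttable. -/
def FullyKRootedCuttable (k n : ℕ) (σ : List ℕ) : Prop :=
  ∀ a b : ℕ, 1 ≤ a → a < b → b ≤ n →
    KRootedCuttable k (Finset.Icc a b).card (restrict σ (Finset.Icc a b))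

/-!
A word `e :: t` has a 1-rooted cut at `γ` exactly when its tail `t` contains no descent `d, c`
(`d` before `c`) with `c ≤ γ < d`. A 231 pattern `x y z` of `σ` survives in the restriction to
`[z, y]` as the descent `m, 1` behind the first letter, which no cut can separate. Conversely,
cut the restriction (with first letter `e`) at `γ = min e (m - 1)`: a descent around `e < m`
would complete `e` to a 231 pattern, and when `e = m` no later letter exceeds `m - 1`.
-/

open List

section LinearOrder

variable {α : Type*} [LinearOrder α]

def Contains231 (l : List α) : Prop :=
  ∃ x y z, [x, y, z] <+ l ∧ z < x ∧ x < y

theorem contains231_iff_exists_get {l : List α} :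
    Contains231 l ↔ ∃ p q r : Fin l.length, p < q ∧ q < r ∧
      l.get r < l.get p ∧ l.get p < l.get q := by
  constructor
  · rintro ⟨x, y, z, hsub, hzx, hxy⟩
    obtain ⟨f, hf⟩ := List.sublist_iff_exists_fin_orderEmbedding_get_eq.mp hsub
    refine ⟨f 0, f 1, f 2, f.strictMono (by decide : (0 : Fin 3) < 1),
      f.strictMono (by decide : (1 : Fin 3) < 2), ?_, ?_⟩
    · rwa [← hf 0, ← hf 2]
    · rwa [← hf 0, ← hf 1]
  · rintro ⟨p, q, r, hpq, hqr, hrp, hpq'⟩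
    refine ⟨l.get p, l.get q, l.get r, ?_, hrp, hpq'⟩
    have hmono : StrictMono ![p, q, r] := Fin.strictMono_iff_lt_succ.mpr <| by
      intro i; fin_cases i <;> assumption
    refine List.sublist_iff_exists_fin_orderEmbedding_get_eq.mpr
      ⟨OrderEmbedding.ofStrictMono _ hmono, fun i => ?_⟩
    fin_cases i <;> rfl

theorem Contains231.mono {l₁ l₂ : List α} (h : l₁ <+ l₂) : Contains231 l₁ → Contains231 l₂ :=
  fun ⟨x, y, z, hsub, hzx, hxy⟩ => ⟨x, y, z, hsub.trans h, hzx, hxy⟩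

theorem Contains231.of_map {β : Type*} [LinearOrder β] {f : α → β} (hf : Monotone f)
    {l : List α} : Contains231 (l.map f) → Contains231 l := by
  rintro ⟨x', y', z', hsub, hzx, hxy⟩
  obtain ⟨l', hl', hmap⟩ := List.sublist_map_iff.mp hsub
  obtain ⟨x, y, z, rfl⟩ : ∃ x y z, l' = [x, y, z] := by
    match l', hmap with
    | [x, y, z], _ => exact ⟨x, y, z, rfl⟩
  simp only [List.map_cons, List.map_nil, List.cons.injEq, and_true] at hmap
  obtain ⟨rfl, rfl, rfl⟩ := hmap
  exact ⟨x, y, z, hl', hf.reflect_lt hzx, hf.reflect_lt hxy⟩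

theorem exists_split_le_lt_iff (γ : α) (t : List α) :
    (∃ ν ω, t = ν ++ ω ∧ (∀ x ∈ ν, x ≤ γ) ∧ ∀ x ∈ ω, γ < x) ↔
      ¬ ∃ d c, [d, c] <+ t ∧ c ≤ γ ∧ γ < d := by
  constructor
  · rintro ⟨ν, ω, rfl, hν, hω⟩ ⟨d, c, hsub, hc, hd⟩
    obtain ⟨l₁, l₂, hdc, h₁, h₂⟩ := List.sublist_append_iff.mp hsub
    match l₁, l₂, hdc with
    | [], _, rfl => exact (hω c (h₂.subset (by simp))).not_ge hc
    | [_], _, rfl => exact (hν d (h₁.subset (by simp))).not_gt hd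
    | [_, _], _, rfl => exact (hν d (h₁.subset (by simp))).not_gt hd
  · intro h
    induction t with
    | nil => exact ⟨[], [], rfl, by simp, by simp⟩
    | cons e t ih =>
      by_cases he : e ≤ γ
      · obtain ⟨ν, ω, rfl, hν, hω⟩ := ih fun ⟨d, c, hsub, hc, hd⟩ =>
          h ⟨d, c, hsub.cons e, hc, hd⟩
        exact ⟨e :: ν, ω, rfl, by simpa [he] using hν, hω⟩
      · refine ⟨[], e :: t, rfl, by simp, fun x hx => ?_⟩
        rcases List.mem_cons.mp hx with rfl | hx
        · exact lt_of_not_ge he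
        · by_contra hxγ
          exact h ⟨e, x, List.cons_sublist_cons.mpr (List.singleton_sublist.mpr hx),
            le_of_not_gt hxγ, lt_of_not_ge he⟩

end LinearOrder

theorem isKRootedCut_one_cons_iff {m e γ : ℕ} {t : List ℕ} :
    IsKRootedCut 1 m (e :: t) γ ↔
      1 ≤ γ ∧ γ ≤ m - 1 ∧ ¬ ∃ d c, [d, c] <+ t ∧ c ≤ γ ∧ γ < d := by
  rw [← exists_split_le_lt_iff]
  refine and_congr_right' (and_congr_right' ⟨?_, ?_⟩)
  · rintro ⟨μ, ν, ω, h, hμ, hν, hω⟩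
    obtain ⟨e', rfl⟩ := List.length_eq_one_iff.mp hμ
    exact ⟨ν, ω, (List.cons.inj h).2, hν, hω⟩
  · rintro ⟨ν, ω, rfl, hν, hω⟩
    exact ⟨[e], ν, ω, rfl, rfl, hν, hω⟩

theorem not_kRootedCuttable_one_of_sublist {m a b c : ℕ} {w : List ℕ} (h : [a, b, c] <+ w)
    (hc : c ≤ 1) (hb : m ≤ b) : ¬ KRootedCuttable 1 m w := by
  rintro ⟨γ, hγ⟩
  obtain ⟨e, t, rfl⟩ :=
    List.exists_cons_of_ne_nil (List.ne_nil_of_mem (h.subset List.mem_cons_self))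
  obtain ⟨hγ₁, hγm, hsplit⟩ := isKRootedCut_one_cons_iff.mp hγ
  exact hsplit ⟨b, c, h.tail, by omega, by omega⟩

theorem kRootedCuttable_one_of_not_contains231 {m : ℕ} {w : List ℕ} (hm : 2 ≤ m) (hne : w ≠ [])
    (hnodup : w.Nodup) (hbound : ∀ x ∈ w, 1 ≤ x ∧ x ≤ m) (h : ¬ Contains231 w) :
    KRootedCuttable 1 m w := by
  obtain ⟨e, t, rfl⟩ := List.exists_cons_of_ne_nil hne
  have he := hbound e List.mem_cons_self
  refine ⟨min e (m - 1), isKRootedCut_one_cons_iff.mpr ⟨by omega, by omega, ?_⟩⟩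
  rintro ⟨d, c, hsub, hc, hd⟩
  have hde : d ≠ e := fun hde => (List.nodup_cons.mp hnodup).1 (hde ▸ hsub.subset (by simp))
  have hce : c ≠ e := fun hce => (List.nodup_cons.mp hnodup).1 (hce ▸ hsub.subset (by simp))
  have hdm := (hbound d (by simp [hsub.subset (by simp : d ∈ [d, c])])).2
  exact h ⟨e, d, c, List.cons_sublist_cons.mpr hsub, by omega, by omega⟩

theorem IsMultiPerm.mem_iff {k n v : ℕ} {σ : List ℕ} (hσ : IsMultiPerm k n σ) (hk : k ≠ 0) :
    v ∈ σ ↔ 1 ≤ v ∧ v ≤ n := by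
  rw [← List.count_pos_iff, hσ v]
  split_ifs with hv <;> simp [hv, Nat.pos_iff_ne_zero, hk]

theorem IsMultiPerm.nodup {n : ℕ} {σ : List ℕ} (hσ : IsMultiPerm 1 n σ) : σ.Nodup :=
  List.nodup_iff_count_le_one.mpr fun v => by rw [hσ v]; split_ifs <;> simp

theorem restrict_Icc (σ : List ℕ) (a b : ℕ) :
    restrict σ (Finset.Icc a b) = (σ.filter fun x => x ∈ Finset.Icc a b).map (· + 1 - a) := by
  refine List.map_congr_left fun x hx => ?_
  have hx : a ≤ x ∧ x ≤ b := by simpa using (List.mem_filter.mp hx).2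
  rw [← Nat.card_Icc]
  congr 1
  ext y
  simp only [Finset.mem_filter, Finset.mem_Icc]
  omega

theorem map_sublist_restrict_Icc {a b : ℕ} {l σ : List ℕ} (h : l <+ σ)
    (hl : ∀ x ∈ l, a ≤ x ∧ x ≤ b) : l.map (· + 1 - a) <+ restrict σ (Finset.Icc a b) := by
  rw [restrict_Icc]
  refine List.Sublist.map _ ?_
  have hfilter := h.filter fun x => decide (x ∈ Finset.Icc a b)
  rwa [List.filter_eq_self.mpr fun x hx => by simpa using hl x hx] at hfilter

theorem not_kRootedCuttable_one_restrict_Icc {x y z : ℕ} {σ : List ℕ} (h : [x, y, z] <+ σ)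
    (hzx : z < x) (hxy : x < y) :
    ¬ KRootedCuttable 1 (Finset.Icc z y).card (restrict σ (Finset.Icc z y)) := by
  refine not_kRootedCuttable_one_of_sublist (map_sublist_restrict_Icc h ?_) (by simp)
    (by simp)
  simp only [List.mem_cons, List.not_mem_nil, or_false]
  omega

theorem kRootedCuttable_one_restrict_Icc {a b : ℕ} {σ : List ℕ} (hσ : σ.Nodup) (hab : a < b)
    (hb : b ∈ σ) (h : ¬ Contains231 σ) :
    KRootedCuttable 1 (Finset.Icc a b).card (restrict σ (Finset.Icc a b)) := by
  rw [restrict_Icc, Nat.card_Icc]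
  refine kRootedCuttable_one_of_not_contains231 (by omega) ?_ ?_ ?_ ?_
  · exact List.ne_nil_of_mem (List.mem_map_of_mem (List.mem_filter.mpr ⟨hb, by simp; omega⟩))
  · refine (hσ.filter _).map_on fun u hu v hv huv => ?_
    simp only [List.mem_filter, decide_eq_true_eq, Finset.mem_Icc] at hu hv
    omega
  · simp only [List.mem_map, List.mem_filter, decide_eq_true_eq, Finset.mem_Icc]
    rintro _ ⟨v, ⟨-, hv⟩, rfl⟩
    omega
  · exact fun h' => h ((h'.of_map fun u v huv => by omega).mono List.filter_sublist)

theorem fullyOneRootedCuttable_iff_avoids_231_general (n : ℕ)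
    (σ : List ℕ) (hσ : IsMultiPerm 1 n σ) :
    FullyKRootedCuttable 1 n σ ↔
      ¬ ∃ p q r : Fin σ.length, p < q ∧ q < r ∧
          σ.get r < σ.get p ∧ σ.get p < σ.get q := by
  rw [← contains231_iff_exists_get]
  constructor
  · rintro hfull ⟨x, y, z, hsub, hzx, hxy⟩
    have hz := (hσ.mem_iff one_ne_zero).mp (hsub.subset (by simp : z ∈ [x, y, z]))
    have hy := (hσ.mem_iff one_ne_zero).mp (hsub.subset (by simp : y ∈ [x, y, z]))
    exact not_kRootedCuttable_one_restrict_Icc hsub hzx hxy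
      (hfull z y hz.1 (hzx.trans hxy) hy.2)
  · intro h a b _ hab hb
    exact kRootedCuttable_one_restrict_Icc hσ.nodup hab
      ((hσ.mem_iff one_ne_zero).mpr ⟨by omega, hb⟩) h

/-- A `1`-permutation (an ordinary permutation of `{1, …, n}` written as a
word) is fully `1`-rooted cuttable if and only if it avoids the pattern `231`,
i.e. there are no positions `p < q < r` with `σ(r) < σ(p) < σ(q)`. -/
theorem fullyOneRootedCuttable_iff_avoids_231 (n : ℕ) (hn : 1 ≤ n)
    (σ : List ℕ) (hσ : IsMultiPerm 1 n σ) :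
    FullyKRootedCuttable 1 n σ ↔
      ¬ ∃ p q r : Fin σ.length, p < q ∧ q < r ∧
          σ.get r < σ.get p ∧ σ.get p < σ.get q :=
  fullyOneRootedCuttable_iff_avoids_231_general n σ hσ
end

section
/- The set of fully k-rooted cuttable k-permutations is a k-permutation class: for every fully k-rooted cuttable k-permutation σ of degree n and every nonempty subset L ⊆ {1,…,n}, the restriction σ^{|L} is fully k-rooted cuttable. -/
/-!
Relabelling by `rank L x = #{y ∈ L | y ≤ x}` is strictly monotone on `L`, so restrictions
compose: restricting `σ^{|L}` to the ranks of a subset `L' ⊆ L` gives `σ^{|L'}`. Hence it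
suffices to cut `σ^{|L'}` for every `L' ⊆ {1, …, n}` with at least two elements. Let `I` be the
interval from `min L'` to `max L'` and `μ·ν·ω` a `k`-rooted cut `γ` of `σ^{|I}`. Restricting
this factorisation to the ranks of `L'` in `I` keeps `ν` below and `ω` above the new cut value
(the rank of `γ`), and shortens only the root; letters moved from the front of `ν` and `ω`
refill the root to length `k`, since all `k` copies of `min L'` survive. The new cut value is
proper because the ranks `1` and `#I` of `min L'` and `max L'` in `I` lie on either side of
`γ`.
-/

open scoped Finset

namespace Finset

variable {α : Type*} [LinearOrder α]

def rank (s : Finset α) (x : α) : ℕ := #{y ∈ s | y ≤ x}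

variable {s : Finset α} {x y : α}

theorem rank_mono (s : Finset α) : Monotone s.rank :=
  fun _ _ hxy => card_le_card (monotone_filter_right s fun _ _ h => h.trans hxy)

theorem rank_lt_rank (hy : y ∈ s) (hxy : x < y) : s.rank x < s.rank y :=
  card_lt_card ⟨monotone_filter_right s fun _ _ h => h.trans hxy.le,
    fun h => (mem_filter.1 (h (mem_filter.2 ⟨hy, le_rfl⟩))).2.not_gt hxy⟩

theorem rank_strictMonoOn (s : Finset α) : StrictMonoOn s.rank s :=
  fun _ _ _ hy hxy => rank_lt_rank hy hxy

theorem rank_pos (hy : y ∈ s) (hyx : y ≤ x) : 0 < s.rank x :=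
  card_pos.2 ⟨y, mem_filter.2 ⟨hy, hyx⟩⟩

theorem rank_lt_card (hy : y ∈ s) (hxy : x < y) : s.rank x < #s :=
  card_lt_card <| filter_ssubset.2 ⟨y, hy, hxy.not_ge⟩

theorem rank_le_card (s : Finset α) (x : α) : s.rank x ≤ #s :=
  card_le_card (filter_subset _ s)

theorem rank_eq_one (hx : x ∈ s) (h : ∀ y ∈ s, x ≤ y) : s.rank x = 1 :=
  card_eq_one.2 ⟨x, ext fun y => by
    simp only [mem_filter, mem_singleton]
    exact ⟨fun hy => le_antisymm hy.2 (h y hy.1), fun hy => hy.symm ▸ ⟨hx, le_rfl⟩⟩⟩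

theorem rank_eq_card (h : ∀ y ∈ s, y ≤ x) : s.rank x = #s :=
  congrArg card (filter_true_of_mem h)

theorem image_rank (s : Finset α) : s.image s.rank = Icc 1 #s := by
  refine eq_of_subset_of_card_le (fun r hr => ?_) ?_
  · obtain ⟨x, hx, rfl⟩ := mem_image.1 hr
    exact mem_Icc.2 ⟨rank_pos hx le_rfl, rank_le_card s x⟩
  · rw [card_image_of_injOn (rank_strictMonoOn s).injOn, Nat.card_Icc, Nat.add_sub_cancel]

theorem rank_image_of_strictMonoOn {β : Type*} [LinearOrder β] {f : α → β}
    (hf : StrictMonoOn f s) (hx : x ∈ s) : (s.image f).rank (f x) = s.rank x := by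
  rw [rank, filter_image, card_image_of_injOn (hf.injOn.mono (filter_subset _ s)), rank]
  exact congrArg card (filter_congr fun y hy => hf.le_iff_le hy hx)

end Finset

theorem restrict_eq_map_rank (σ : List ℕ) (L : Finset ℕ) :
    restrict σ L = (σ.filter (· ∈ L)).map L.rank :=
  rfl

theorem restrict_append (σ τ : List ℕ) (L : Finset ℕ) :
    restrict (σ ++ τ) L = restrict σ L ++ restrict τ L := by
  simp only [restrict, List.filter_append, List.map_append]

theorem restrict_restrict_image_rank (σ : List ℕ) {L' L : Finset ℕ} (h : L' ⊆ L) :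
    restrict (restrict σ L) (L'.image L.rank) = restrict σ L' := by
  simp only [restrict_eq_map_rank, List.filter_map, List.map_map, List.filter_filter,
    Function.comp_def]
  have hfilter : ∀ x ∈ σ,
      (decide (L.rank x ∈ L'.image L.rank) && decide (x ∈ L)) = decide (x ∈ L') := by
    intro x _
    by_cases hx : x ∈ L
    · simpa [hx, ← Finset.coe_image] using L.rank_strictMonoOn.injOn.mem_image_iff h hx
    · simp [hx, mt (@h x) hx]
  rw [List.filter_congr hfilter]
  refine List.map_congr_left fun x hx => ?_
  exact Finset.rank_image_of_strictMonoOn (L.rank_strictMonoOn.mono h)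
    (by simpa using (List.mem_filter.1 hx).2)

theorem length_restrict_ge {k n : ℕ} {σ : List ℕ} (hσ : IsMultiPerm k n σ) {L : Finset ℕ}
    {x : ℕ} (hx : x ∈ L) (hx1 : 1 ≤ x) (hxn : x ≤ n) : k ≤ (restrict σ L).length := by
  have hcount : σ.count x = k := by rw [hσ x, if_pos ⟨hx1, hxn⟩]
  rw [← hcount, restrict, List.length_map, ← List.countP_eq_length_filter, List.count]
  exact List.countP_mono_left fun y _ hy => by simpa [(beq_iff_eq.1 hy).symm] using hx

theorem isKRootedCut_of_root_length_le {k n γ : ℕ} {τ μ ν ω : List ℕ} (hγ1 : 1 ≤ γ)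
    (hγn : γ ≤ n - 1) (hτ : τ = μ ++ ν ++ ω) (hμ : μ.length ≤ k) (hk : k ≤ τ.length)
    (hν : ∀ x ∈ ν, x ≤ γ) (hω : ∀ x ∈ ω, γ < x) : IsKRootedCut k n τ γ := by
  refine ⟨hγ1, hγn, τ.take k, ν.drop (k - μ.length), ω.drop (k - μ.length - ν.length),
    ?_, List.length_take_of_le hk, fun x hx => hν x (List.mem_of_mem_drop hx),
    fun x hx => hω x (List.mem_of_mem_drop hx)⟩
  conv_lhs => rw [← List.take_append_drop k τ]
  rw [List.append_assoc, hτ, List.append_assoc, List.drop_append, List.drop_append,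
    List.drop_eq_nil_of_le hμ, List.nil_append]

theorem isKRootedCut_restrict_rank {k n γ : ℕ} {τ : List ℕ} (h : IsKRootedCut k n τ γ)
    {S : Finset ℕ} {s t : ℕ} (hs : s ∈ S) (hsγ : s ≤ γ) (ht : t ∈ S) (hγt : γ < t)
    (hk : k ≤ (restrict τ S).length) : IsKRootedCut k #S (restrict τ S) (S.rank γ) := by
  obtain ⟨-, -, μ, ν, ω, rfl, hμ, hν, hω⟩ := h
  refine isKRootedCut_of_root_length_le (Finset.rank_pos hs hsγ)
    (Nat.le_sub_one_of_lt (Finset.rank_lt_card ht hγt)) (by rw [restrict_append, restrict_append])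
    ?_ hk ?_ ?_
  · exact (List.length_map _).trans_le ((List.length_filter_le _ μ).trans hμ.le)
  · simp only [restrict_eq_map_rank, List.mem_map, List.mem_filter, decide_eq_true_eq]
    rintro _ ⟨x, ⟨hx, -⟩, rfl⟩
    exact S.rank_mono (hν x hx)
  · simp only [restrict_eq_map_rank, List.mem_map, List.mem_filter, decide_eq_true_eq]
    rintro _ ⟨x, ⟨hx, hxS⟩, rfl⟩
    exact Finset.rank_lt_rank hxS (hω x hx)

open Finset in
theorem kRootedCuttable_restrict {k n : ℕ} {σ : List ℕ} (hσ : IsMultiPerm k n σ)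
    (hfull : FullyKRootedCuttable k n σ) {L : Finset ℕ} (hL : L ⊆ Icc 1 n) (hcard : 1 < #L) :
    KRootedCuttable k #L (restrict σ L) := by
  have hne : L.Nonempty := card_pos.1 (by omega)
  have hmM : L.min' hne < L.max' hne := min'_lt_max'_of_card L hcard
  have hm := L.min'_mem hne
  have hM := L.max'_mem hne
  have hm1 : 1 ≤ L.min' hne := (mem_Icc.1 (hL hm)).1
  have hMn : L.max' hne ≤ n := (mem_Icc.1 (hL hM)).2
  set I := Icc (L.min' hne) (L.max' hne)
  have hLI : L ⊆ I := fun x hx => mem_Icc.2 ⟨L.min'_le x hx, L.le_max' x hx⟩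
  obtain ⟨γ, hγ⟩ := hfull _ _ hm1 hmM hMn
  rw [← restrict_restrict_image_rank σ hLI,
    ← card_image_of_injOn (I.rank_strictMonoOn.injOn.mono hLI)]
  refine ⟨_, isKRootedCut_restrict_rank hγ (mem_image_of_mem _ hm) ?_
    (mem_image_of_mem _ hM) ?_ ?_⟩
  · rw [rank_eq_one (left_mem_Icc.2 hmM.le) fun y hy => (mem_Icc.1 hy).1]
    exact hγ.1
  · have := hγ.2.1
    rw [rank_eq_card fun y hy => (mem_Icc.1 hy).2]
    rw [Nat.card_Icc] at this ⊢
    omega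
  · rw [restrict_restrict_image_rank σ hLI]
    exact length_restrict_ge hσ hm hm1 (hmM.le.trans hMn)

theorem fullyKRootedCuttable_restrict_general (k n : ℕ)
    (σ : List ℕ) (hσ : IsMultiPerm k n σ) (hfull : FullyKRootedCuttable k n σ)
    (L : Finset ℕ) (hLsub : L ⊆ Finset.Icc 1 n) :
    FullyKRootedCuttable k L.card (restrict σ L) := by
  intro a b ha hab hb
  obtain ⟨L', hL'L, hL'⟩ : ∃ L' ⊆ L, L'.image L.rank = Finset.Icc a b :=
    Finset.subset_image_iff.1 (L.image_rank ▸ Finset.Icc_subset_Icc ha hb)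
  have hcard : L'.card = (Finset.Icc a b).card := by
    rw [← hL', Finset.card_image_of_injOn (L.rank_strictMonoOn.injOn.mono hL'L)]
  rw [← hcard, ← hL', restrict_restrict_image_rank σ hL'L]
  refine kRootedCuttable_restrict hσ hfull (hL'L.trans hLsub) ?_
  rw [hcard, Nat.card_Icc]
  omega

/-- The set of fully `k`-rooted cuttable `k`-permutations is a `k`-permutation
class: any restriction of a fully `k`-rooted cuttable `k`-permutation is fully
`k`-rooted cuttable. -/
theorem fullyKRootedCuttable_restrict (k n : ℕ) (hk : 1 ≤ k) (hn : 1 ≤ n)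
    (σ : List ℕ) (hσ : IsMultiPerm k n σ) (hfull : FullyKRootedCuttable k n σ)
    (L : Finset ℕ) (hL : L.Nonempty) (hLsub : L ⊆ Finset.Icc 1 n) :
    FullyKRootedCuttable k L.card (restrict σ L) :=
  fullyKRootedCuttable_restrict_general k n σ hσ hfull L hLsub
end

section
/- Fix an integer k ≥ 1, integers 0 ≤ i, j ≤ k, and a word a ∈ {l,r}^k with exactly i letters equal to r. Then: (1) the number of words b ∈ {l,r}^k with exactly j letters equal to r for which there exists m ∈ {1,…,k} with a_m = l and b_m = r equals binom(k,j) − binom(i,j); (2) the number of words b ∈ {l,r}^k with exactly j letters equal to r for which there exists m ∈ {1,…,k} with m > i and b_m = r also equals binom(k,j) − binom(i,j). Consequently, for every a with |a|_r = i, the row sums of the parallel and series transition matrices over the words b with |b|_r = j both equal binom(k,j) − binom(i,j). -/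
/-- The number of letters `r` in a word of `{l, r}^k`, encoding letters `l`
and `r` as `false` and `true` respectively. -/
def rcount {k : ℕ} (a : Fin k → Bool) : ℕ :=
  (Finset.univ.filter fun m => a m = true).card

/-- The parallel transition matrix `M_k^∥`: the entry at `(a, b)` is `1` if
there is a position `m` with `a_m = l` and `b_m = r`, and `0` otherwise. -/
def Mpar (k : ℕ) : Matrix (Fin k → Bool) (Fin k → Bool) ℕ :=
  Matrix.of fun a b => if ∃ m, a m = false ∧ b m = true then 1 else 0

/-- The series transition matrix `M_k^⊢`: the entry at `(a, b)` is `1` if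
there is a (1-indexed) position `m > |a|_r` with `b_m = r`, and `0`
otherwise. -/
def Mser (k : ℕ) : Matrix (Fin k → Bool) (Fin k → Bool) ℕ :=
  Matrix.of fun a b => if ∃ m : Fin k, rcount a ≤ (m : ℕ) ∧ b m = true then 1 else 0

/-- The `(k+1) × (k+1)` matrix `N_k` with entries
`(N_k)_{i,j} = binom k j - binom i j` for `0 ≤ i, j ≤ k`. -/
def Nmat (k : ℕ) : Matrix (Fin (k + 1)) (Fin (k + 1)) ℕ :=
  Matrix.of fun i j => Nat.choose k (j : ℕ) - Nat.choose (i : ℕ) (j : ℕ)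

/-! A word of `{l, r}^k` is determined by its set of `r`-positions, so the words with `j`
letters `r` and some `r` outside a set `S` of `i` positions correspond to the `j`-subsets of
positions not contained in `S`; there are `binom k j - binom i j` of them. For `M_k^∥` take
for `S` the `r`-positions of `a`, for `M_k^⊢` the first `i` positions. -/

open Finset

lemma card_powersetCard_filter_not_subset {ι : Type*} [Fintype ι] [DecidableEq ι]
    (S : Finset ι) (j : ℕ) :
    #{T ∈ powersetCard j (univ : Finset ι) | ¬ T ⊆ S}
      = (Fintype.card ι).choose j - (#S).choose j := by
  have hsub : {T ∈ powersetCard j (univ : Finset ι) | T ⊆ S} = powersetCard j S := by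
    ext T; simp [mem_powersetCard, and_comm]
  rw [filter_not, card_sdiff_of_subset (filter_subset _ _), hsub, card_powersetCard,
    card_powersetCard, card_univ]

lemma card_filter_rcount_eq_card_powersetCard_filter {k : ℕ} (j : ℕ)
    (p : Finset (Fin k) → Prop) [DecidablePred p] :
    #{b : Fin k → Bool | rcount b = j ∧ p {m | b m = true}}
      = #{T ∈ powersetCard j univ | p T} := by
  apply card_nbij' (fun b => ({m | b m = true} : Finset (Fin k))) (fun T m => decide (m ∈ T))
  · intro b hb
    simp only [mem_coe, mem_filter, mem_univ, true_and, mem_powersetCard] at hb ⊢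
    exact ⟨⟨subset_univ _, hb.1⟩, hb.2⟩
  · intro T hT
    have hT' : ({m | decide (m ∈ T) = true} : Finset (Fin k)) = T := by ext; simp
    simp only [mem_coe, mem_filter, mem_univ, true_and, mem_powersetCard] at hT ⊢
    simpa [rcount, hT'] using ⟨hT.1.2, hT.2⟩
  · intro b _; funext m; simp
  · intro T _; ext m; simp

lemma card_filter_rcount_eq_exists_not_mem {k : ℕ} (S : Finset (Fin k)) (j : ℕ) :
    #{b : Fin k → Bool | rcount b = j ∧ ∃ m, m ∉ S ∧ b m = true}
      = k.choose j - (#S).choose j := by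
  have hsupp := card_filter_rcount_eq_card_powersetCard_filter j (fun T => ¬ T ⊆ S)
  rw [card_powersetCard_filter_not_subset, Fintype.card_fin] at hsupp
  rw [← hsupp]
  simp [not_subset, and_comm]

theorem rowSums_Mpar_Mser_general (k : ℕ) (i j : ℕ) (hik : i ≤ k)
    (a : Fin k → Bool) (ha : rcount a = i) :
    ((Finset.univ.filter fun b : Fin k → Bool =>
        rcount b = j ∧ ∃ m, a m = false ∧ b m = true).card
      = Nat.choose k j - Nat.choose i j) ∧
    ((Finset.univ.filter fun b : Fin k → Bool =>
        rcount b = j ∧ ∃ m : Fin k, i ≤ (m : ℕ) ∧ b m = true).card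
      = Nat.choose k j - Nat.choose i j) ∧
    (∑ b ∈ Finset.univ.filter fun b : Fin k → Bool => rcount b = j,
        Mpar k a b = Nat.choose k j - Nat.choose i j) ∧
    (∑ b ∈ Finset.univ.filter fun b : Fin k → Bool => rcount b = j,
        Mser k a b = Nat.choose k j - Nat.choose i j) := by
  have hpar : #{b : Fin k → Bool | rcount b = j ∧ ∃ m, a m = false ∧ b m = true}
      = k.choose j - i.choose j := by
    rw [← ha, rcount, ← card_filter_rcount_eq_exists_not_mem]
    simp
  have hser : #{b : Fin k → Bool | rcount b = j ∧ ∃ m : Fin k, i ≤ (m : ℕ) ∧ b m = true}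
      = k.choose j - i.choose j := by
    have hcard : #{m : Fin k | (m : ℕ) < i} = i := by
      rw [Fin.card_filter_val_lt, min_eq_right hik]
    conv_rhs => rw [← hcard]
    rw [← card_filter_rcount_eq_exists_not_mem]
    simp
  refine ⟨hpar, hser, ?_, ?_⟩
  · rw [← hpar, ← filter_filter]
    simp [Mpar, sum_boole]
  · rw [← hser, ← filter_filter]
    simp [Mser, ha, sum_boole]

/-- For a word `a ∈ {l, r}^k` with exactly `i` letters `r` and `0 ≤ j ≤ k`:
(1) the number of words `b` with exactly `j` letters `r` such that some
position carries `l` in `a` and `r` in `b` is `binom k j - binom i j`;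
(2) the number of words `b` with exactly `j` letters `r` such that some
(1-indexed) position `m > i` carries `r` in `b` is also
`binom k j - binom i j`. Consequently the corresponding row sums of the
parallel and series transition matrices both equal `binom k j - binom i j`. -/
theorem rowSums_Mpar_Mser (k : ℕ) (hk : 1 ≤ k) (i j : ℕ) (hik : i ≤ k)
    (hjk : j ≤ k) (a : Fin k → Bool) (ha : rcount a = i) :
    ((Finset.univ.filter fun b : Fin k → Bool =>
        rcount b = j ∧ ∃ m, a m = false ∧ b m = true).card
      = Nat.choose k j - Nat.choose i j) ∧
    ((Finset.univ.filter fun b : Fin k → Bool =>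
        rcount b = j ∧ ∃ m : Fin k, i ≤ (m : ℕ) ∧ b m = true).card
      = Nat.choose k j - Nat.choose i j) ∧
    (∑ b ∈ Finset.univ.filter fun b : Fin k → Bool => rcount b = j,
        Mpar k a b = Nat.choose k j - Nat.choose i j) ∧
    (∑ b ∈ Finset.univ.filter fun b : Fin k → Bool => rcount b = j,
        Mser k a b = Nat.choose k j - Nat.choose i j) :=
  rowSums_Mpar_Mser_general k i j hik a ha
end

section
/- Fix an integer k ≥ 1 and let M be either the parallel transition matrix M_k^∥ or the series transition matrix M_k^⊢. Then for every natural number p, Σ_{a,b ∈ {l,r}^k} (M^p)_{a,b} = Σ_{i=0}^{k} Σ_{j=0}^{k} (N_k^p)_{i,j} · binom(k,i). In particular, the total sum of the entries of (M_k^∥)^p equals the total sum of the entries of (M_k^⊢)^p for every p. -/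
open Finset

lemma rcount_le {k : ℕ} (a : Fin k → Bool) : rcount a ≤ k := by
  classical
  calc rcount a ≤ (Finset.univ : Finset (Fin k)).card := Finset.card_filter_le _ _
  _ = k := by simp

/-- The fiber map sending a word to its `r`-count, as an element of `Fin (k+1)`. -/
def fib (k : ℕ) (a : Fin k → Bool) : Fin (k + 1) := ⟨rcount a, Nat.lt_succ_of_le (rcount_le a)⟩

/-- The number of words with `r`-count `j` and support contained in `S` is
`choose S.card j`. -/
lemma card_supp_subset {k : ℕ} (S : Finset (Fin k)) (j : ℕ) :
    (Finset.univ.filter fun b : Fin k → Bool =>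
        rcount b = j ∧ ∀ m, b m = true → m ∈ S).card = S.card.choose j := by
  classical
  rw [← Finset.card_powersetCard]
  refine Finset.card_bij' (fun b _ => Finset.univ.filter fun m => b m = true)
    (fun t _ => fun m => decide (m ∈ t)) ?_ ?_ ?_ ?_
  · intro b hb
    simp only [Finset.mem_filter, Finset.mem_univ, true_and] at hb
    rw [Finset.mem_powersetCard]
    constructor
    · intro m hm
      simp only [Finset.mem_filter, Finset.mem_univ, true_and] at hm
      exact hb.2 m hm
    · exact hb.1
  · intro t ht
    rw [Finset.mem_powersetCard] at ht
    simp only [Finset.mem_filter, Finset.mem_univ, true_and]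
    constructor
    · have : (Finset.univ.filter fun m : Fin k => decide (m ∈ t) = true) = t := by
        ext m; simp
      rw [rcount, this, ht.2]
    · intro m hm
      simp only [decide_eq_true_eq] at hm
      exact ht.1 hm
  · intro b _
    funext m
    simp only [Finset.mem_filter, Finset.mem_univ, true_and]
    by_cases h : b m = true <;> simp [h]
  · intro t _
    ext m
    simp

lemma card_fiber {k : ℕ} (i : Fin (k + 1)) :
    (Finset.univ.filter fun a : Fin k → Bool => fib k a = i).card = k.choose (i : ℕ) := by
  classical
  have h : (Finset.univ.filter fun a : Fin k → Bool => fib k a = i)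
      = Finset.univ.filter fun b : Fin k → Bool =>
          rcount b = (i : ℕ) ∧ ∀ m, b m = true → m ∈ (Finset.univ : Finset (Fin k)) := by
    ext a
    simp only [Finset.mem_filter, Finset.mem_univ, true_and, and_true, fib, Fin.ext_iff,
      implies_true]
  rw [h, card_supp_subset]
  simp

/-- Both transition matrices are exact lumpings of `Nmat k` along `fib k`. -/
lemma key_lump {k : ℕ} (M : Matrix (Fin k → Bool) (Fin k → Bool) ℕ)
    (hM : M = Mpar k ∨ M = Mser k) (a : Fin k → Bool) (j : Fin (k + 1)) :
    ∑ b ∈ Finset.univ.filter (fun b => fib k b = j), M a b = Nmat k (fib k a) j := by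
  classical
  -- choose the "forbidden support" set S according to which matrix we have
  obtain ⟨S, hScard, hS⟩ :
      ∃ S : Finset (Fin k), S.card = rcount a ∧
        ∀ b, M a b = if ∀ m, b m = true → m ∈ S then 0 else 1 := by
    rcases hM with h | h
    · refine ⟨Finset.univ.filter fun m => a m = true, rfl, fun b => ?_⟩
      subst h
      simp only [Mpar, Matrix.of_apply]
      by_cases hex : ∃ m, a m = false ∧ b m = true
      · obtain ⟨m, hm1, hm2⟩ := hex
        rw [if_pos, if_neg]
        · intro hall
          have := hall m hm2
          simp only [Finset.mem_filter, Finset.mem_univ, true_and] at this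
          rw [this] at hm1; simp at hm1
        · exact ⟨m, hm1, hm2⟩
      · rw [if_neg hex, if_pos]
        intro m hm
        simp only [Finset.mem_filter, Finset.mem_univ, true_and]
        by_contra h'
        exact hex ⟨m, by simpa using h', hm⟩
    · refine ⟨Finset.attachFin (Finset.range (rcount a))
        (fun m hm => lt_of_lt_of_le (Finset.mem_range.mp hm) (rcount_le a)), ?_, fun b => ?_⟩
      · rw [Finset.card_attachFin, Finset.card_range]
      subst h
      simp only [Mser, Matrix.of_apply]
      by_cases hex : ∃ m : Fin k, rcount a ≤ (m : ℕ) ∧ b m = true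
      · obtain ⟨m, hm1, hm2⟩ := hex
        rw [if_pos, if_neg]
        · intro hall
          have := hall m hm2
          rw [Finset.mem_attachFin, Finset.mem_range] at this
          omega
        · exact ⟨m, hm1, hm2⟩
      · rw [if_neg hex, if_pos]
        intro m hm
        rw [Finset.mem_attachFin, Finset.mem_range]
        by_contra h'
        exact hex ⟨m, by omega, hm⟩
  -- turn the sum into a difference of cardinalities
  have hrw : ∀ b, M a b = if ¬ ∀ m, b m = true → m ∈ S then 1 else 0 := by
    intro b; rw [hS b, ite_not]
  calc ∑ b ∈ Finset.univ.filter (fun b => fib k b = j), M a b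
      = (Finset.univ.filter fun b : Fin k → Bool =>
          fib k b = j ∧ ¬ ∀ m, b m = true → m ∈ S).card := by
        simp_rw [hrw]
        rw [Finset.sum_boole, Finset.filter_filter, Nat.cast_id]
    _ = Nat.choose k (j : ℕ) - Nat.choose (rcount a) (j : ℕ) := by
        have hsplit : (Finset.univ.filter fun b : Fin k → Bool =>
              fib k b = j ∧ ∀ m, b m = true → m ∈ S).card
            + (Finset.univ.filter fun b : Fin k → Bool =>
              fib k b = j ∧ ¬ ∀ m, b m = true → m ∈ S).card
            = (Finset.univ.filter fun b : Fin k → Bool => fib k b = j).card := by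
          rw [← Finset.filter_filter, ← Finset.filter_filter]
          exact Finset.card_filter_add_card_filter_not
            (p := fun b : Fin k → Bool => ∀ m, b m = true → m ∈ S)
        have h1 : (Finset.univ.filter fun b : Fin k → Bool =>
            fib k b = j ∧ ∀ m, b m = true → m ∈ S).card = (rcount a).choose (j : ℕ) := by
          rw [← hScard, ← card_supp_subset S (j : ℕ)]
          congr 1
          ext b
          simp [fib, Fin.ext_iff]
        have h2 : (Finset.univ.filter fun b : Fin k → Bool => fib k b = j).card
            = k.choose (j : ℕ) := card_fiber j
        rw [← h2, ← h1, ← hsplit]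
        exact (Nat.add_sub_cancel_left _ _).symm
    _ = Nmat k (fib k a) j := by simp [Nmat, fib]

/-- Lumping for powers. -/
lemma lump_pow {k : ℕ} (M : Matrix (Fin k → Bool) (Fin k → Bool) ℕ)
    (hM : M = Mpar k ∨ M = Mser k) (p : ℕ) (a : Fin k → Bool) (j : Fin (k + 1)) :
    ∑ b ∈ Finset.univ.filter (fun b => fib k b = j), (M ^ p) a b
      = (Nmat k ^ p) (fib k a) j := by
  classical
  induction p generalizing a j with
  | zero =>
    simp only [pow_zero, Matrix.one_apply]
    rw [Finset.sum_ite_eq (Finset.univ.filter fun b => fib k b = j) a (fun _ => 1)]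
    simp
  | succ p ih =>
    rw [pow_succ, pow_succ]
    simp only [Matrix.mul_apply]
    rw [Finset.sum_comm]
    have step : ∀ c, ∑ b ∈ Finset.univ.filter (fun b => fib k b = j), (M ^ p) a c * M c b
        = (M ^ p) a c * Nmat k (fib k c) j := by
      intro c
      rw [← Finset.mul_sum, key_lump M hM]
    simp_rw [step]
    rw [← Finset.sum_fiberwise_of_maps_to (g := fib k) (t := Finset.univ)
      (fun c _ => Finset.mem_univ _) (fun c => (M ^ p) a c * Nmat k (fib k c) j)]
    have : ∀ i : Fin (k + 1),
        ∑ c ∈ Finset.univ.filter (fun c => fib k c = i), (M ^ p) a c * Nmat k (fib k c) j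
          = (Nmat k ^ p) (fib k a) i * Nmat k i j := by
      intro i
      rw [← ih a i, Finset.sum_mul]
      apply Finset.sum_congr rfl
      intro c hc
      rw [(Finset.mem_filter.mp hc).2]
    simp_rw [this]

/-- For `M` equal to either the parallel or the series transition matrix and
every natural number `p`, the total sum of the entries of `M ^ p` equals
`∑_{0 ≤ i, j ≤ k} (N_k ^ p)_{i,j} * binom k i`. In particular the total entry
sums of `(M_k^∥)^p` and `(M_k^⊢)^p` agree for every `p`. -/
theorem entrySum_pow_Mpar_Mser (k : ℕ) (hk : 1 ≤ k) (p : ℕ) :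
    (∀ M : Matrix (Fin k → Bool) (Fin k → Bool) ℕ, (M = Mpar k ∨ M = Mser k) →
      ∑ a, ∑ b, (M ^ p) a b
        = ∑ i : Fin (k + 1), ∑ j : Fin (k + 1),
            (Nmat k ^ p) i j * Nat.choose k (i : ℕ)) ∧
    (∑ a, ∑ b, (Mpar k ^ p) a b = ∑ a, ∑ b, (Mser k ^ p) a b) := by
  classical
  have main : ∀ M : Matrix (Fin k → Bool) (Fin k → Bool) ℕ, (M = Mpar k ∨ M = Mser k) →
      ∑ a, ∑ b, (M ^ p) a b
        = ∑ i : Fin (k + 1), ∑ j : Fin (k + 1),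
            (Nmat k ^ p) i j * Nat.choose k (i : ℕ) := by
    intro M hM
    have inner : ∀ a, ∑ b, (M ^ p) a b = ∑ j : Fin (k + 1), (Nmat k ^ p) (fib k a) j := by
      intro a
      rw [← Finset.sum_fiberwise_of_maps_to (g := fib k) (t := Finset.univ)
        (fun b _ => Finset.mem_univ _) (fun b => (M ^ p) a b)]
      exact Finset.sum_congr rfl fun j _ => lump_pow M hM p a j
    simp_rw [inner]
    rw [Finset.sum_comp (fun i : Fin (k+1) => ∑ j : Fin (k + 1), (Nmat k ^ p) i j) (fib k)]
    rw [Finset.sum_subset (Finset.subset_univ ((Finset.univ : Finset (Fin k → Bool)).image (fib k)))]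
    · apply Finset.sum_congr rfl
      intro i _
      rw [card_fiber i, smul_eq_mul, mul_comm, Finset.sum_mul]
    · intro i _ hi
      have : (Finset.univ.filter fun a : Fin k → Bool => fib k a = i).card = 0 := by
        rw [Finset.card_eq_zero, Finset.filter_eq_empty_iff]
        intro a _
        intro h
        exact hi (Finset.mem_image.mpr ⟨a, Finset.mem_univ a, h⟩)
      rw [this, zero_smul]
  exact ⟨main, by rw [main (Mpar k) (Or.inl rfl), main (Mser k) (Or.inr rfl)]⟩
end

section
/- Fix an integer k ≥ 1 and for each natural number p set S_p := Σ_{a,b ∈ {l,r}^k} ((M_k^∥)^p)_{a,b}. Then in the ring ℤ[[t]] of formal power series, (1 + Σ_{p≥0} S_p t^{p+1}) · (Σ_{j=0}^{k−1} (−1)^j A(k,j) t^{j+1}) = t·(1+t)^{k+1}; equivalently, the generating series R_k(t) = 1 + Σ_{p≥0} S_p t^{p+1} satisfies R_k(t) · E_k(−t) = −t·(1+t)^{k+1}. -/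
/-!
Over `ℤ`, `M_k^∥ = J - Z`, where `J` is the all-ones matrix and `Z_{a,b} = [b ≤ a]` is the zeta
matrix of the Boolean lattice `{l < r}^k`. As the `k`-th Kronecker power of the `2 × 2` zeta
matrix, `Z^q` has entry sum `(q + 2)^k`. Since `J` has rank one, the entry sum `s` satisfies
`s (A * J * B) = s A * s B`, and the expansion
`(J - Z)^(p+1) = ∑_{i+j=p} (-Z)^i J (J - Z)^j + (-Z)^(p+1)` turns into
`R_k(t) · ∑_n (-1)^n (n+1)^k t^n = 1`.

Grouping the tuples `f : [k] → [n+1]` by the permutation `σ` sorting them gives Worpitzky's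
identity `∑_j A(k,j) binom(n+k-j, k) = (n+1)^k`: `f ∘ σ` is weakly increasing and strictly
increasing across the descents of `σ`, and adding to its `i`-th value the number of ascents of
`σ` before `i` makes it strictly increasing. Hence
`∑_n (n+1)^k t^n · (1-t)^(k+1) = ∑_j A(k,j) t^j`; now substitute `t ↦ -t`.
-/

open Finset PowerSeries

theorem add_pow_succ_eq_sum_antidiagonal {R : Type*} [Semiring R] (a b : R) (n : ℕ) :
    (a + b) ^ (n + 1) = ∑ p ∈ antidiagonal n, b ^ p.1 * a * (a + b) ^ p.2 + b ^ (n + 1) := by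
  induction n with
  | zero => simp
  | succ n ih =>
    have hb : b * (a + b) ^ (n + 1) =
        ∑ p ∈ antidiagonal n, b ^ (p.1 + 1) * a * (a + b) ^ p.2 + b ^ (n + 2) := by
      rw [ih, mul_add, mul_sum]
      simp only [pow_succ', mul_assoc]
    rw [pow_succ' _ (n + 1), add_mul, hb, Nat.sum_antidiagonal_succ, pow_zero, one_mul, add_assoc]

namespace Matrix

variable {ι α β γ δ R : Type*} [CommSemiring R]

def entrySum [Fintype α] [Fintype β] (A : Matrix α β R) : R := ∑ a, ∑ b, A a b

def kroneckerPow (ι : Type*) [Fintype ι] (A : Matrix α β R) : Matrix (ι → α) (ι → β) R :=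
  of fun a b => ∏ i, A (a i) (b i)

noncomputable def entrySumSeries [Fintype ι] [DecidableEq ι] (A : Matrix ι ι R) : R⟦X⟧ :=
  mk fun p => entrySum (A ^ p)

section entrySum

variable [Fintype α] [Fintype β]

theorem entrySum_add (A B : Matrix α β R) : entrySum (A + B) = entrySum A + entrySum B := by
  simp [entrySum, sum_add_distrib]

theorem entrySum_sum {κ : Type*} (s : Finset κ) (A : κ → Matrix α β R) :
    entrySum (∑ p ∈ s, A p) = ∑ p ∈ s, entrySum (A p) := by
  simp only [entrySum, sum_apply]
  exact (sum_congr rfl fun _ _ => sum_comm).trans sum_comm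

theorem entrySum_smul (r : R) (A : Matrix α β R) : entrySum (r • A) = r * entrySum A := by
  simp [entrySum, mul_sum]

theorem entrySum_map {S : Type*} [CommSemiring S] (f : R →+* S) (A : Matrix α β R) :
    entrySum (A.map f) = f (entrySum A) := by
  simp [entrySum, map_sum]

theorem entrySum_mul_of_one_mul [Fintype γ] [Fintype δ] (A : Matrix α β R) (B : Matrix γ δ R) :
    entrySum (A * (of fun _ _ => 1 : Matrix β γ R) * B) = entrySum A * entrySum B := by
  have h (a : α) (d : δ) : (A * (of fun _ _ => 1 : Matrix β γ R) * B) a d =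
      (∑ b, A a b) * ∑ c, B c d := by
    simp only [mul_apply, of_apply, mul_one, sum_mul, mul_sum]
  simp only [entrySum, h, ← mul_sum, ← sum_mul]
  exact congrArg _ sum_comm

end entrySum

section kroneckerPow

variable [Fintype ι]

theorem kroneckerPow_one [DecidableEq α] : kroneckerPow ι (1 : Matrix α α R) = 1 := by
  ext a b
  simp [kroneckerPow, one_apply, prod_boole, funext_iff]

variable [DecidableEq ι]

theorem kroneckerPow_mul [Fintype β] (A : Matrix α β R) (B : Matrix β γ R) :
    kroneckerPow ι A * kroneckerPow ι B = kroneckerPow ι (A * B) := by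
  ext a c
  simp only [kroneckerPow, mul_apply, of_apply, Fintype.prod_sum, prod_mul_distrib]

theorem kroneckerPow_pow [Fintype α] [DecidableEq α] (A : Matrix α α R) (q : ℕ) :
    kroneckerPow ι (A ^ q) = kroneckerPow ι A ^ q := by
  induction q with
  | zero => exact kroneckerPow_one
  | succ q ih => rw [pow_succ, ← kroneckerPow_mul, ih, pow_succ]

theorem entrySum_kroneckerPow [Fintype α] [Fintype β] (A : Matrix α β R) :
    entrySum (kroneckerPow ι A) = entrySum A ^ Fintype.card ι := by
  simp only [entrySum, kroneckerPow, of_apply, ← Fintype.prod_sum]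
  rw [← Fintype.prod_sum fun (_ : ι) a => ∑ b, A a b, prod_const, card_univ]

end kroneckerPow

theorem one_add_X_mul_entrySumSeries_sub_mul {R : Type*} [CommRing R] [Fintype ι] [DecidableEq ι]
    (Z : Matrix ι ι R) :
    (1 + X * entrySumSeries (of (fun _ _ => 1) - Z)) * (1 - X * entrySumSeries (-Z)) = 1 := by
  have key : entrySumSeries (of (fun _ _ => 1) - Z) =
      entrySumSeries (-Z) * (1 + X * entrySumSeries (of (fun _ _ => 1) - Z)) := by
    ext (_ | n)
    · simp [entrySumSeries]
    · rw [mul_add, mul_one, mul_left_comm, map_add, coeff_succ_X_mul, coeff_mul]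
      simp only [entrySumSeries, coeff_mk, sub_eq_add_neg, add_pow_succ_eq_sum_antidiagonal,
        entrySum_add, entrySum_sum, entrySum_mul_of_one_mul]
      ring
  linear_combination X * key

end Matrix

open Matrix

def zetaBool (R : Type*) [Semiring R] : Matrix Bool Bool R := of fun x y => if y ≤ x then 1 else 0

theorem zetaBool_pow {R : Type*} [Semiring R] (q : ℕ) :
    zetaBool R ^ q = of fun x y => if y < x then (q : R) else if x = y then 1 else 0 := by
  induction q with
  | zero => ext (_ | _) (_ | _) <;> simp
  | succ q ih =>
    rw [pow_succ, ih]
    ext (_ | _) (_ | _) <;> simp +decide [zetaBool, mul_apply, add_comm]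

theorem entrySum_zetaBool_pow {R : Type*} [CommSemiring R] (q : ℕ) :
    entrySum (zetaBool R ^ q) = q + 2 := by
  simp +decide [zetaBool_pow, entrySum]
  ring

theorem entrySum_neg_kroneckerPow_zetaBool_pow (k q : ℕ) :
    entrySum ((-kroneckerPow (Fin k) (zetaBool ℤ)) ^ q) = (-1) ^ q * ((q : ℤ) + 2) ^ k := by
  rw [← neg_one_smul ℤ, smul_pow, entrySum_smul, ← kroneckerPow_pow, entrySum_kroneckerPow,
    entrySum_zetaBool_pow, Fintype.card_fin]

theorem Mpar_map_cast (k : ℕ) :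
    (Mpar k).map (Nat.cast : ℕ → ℤ) = of (fun _ _ => 1) - kroneckerPow (Fin k) (zetaBool ℤ) := by
  ext a b
  have h : (∃ m, a m = false ∧ b m = true) ↔ ¬ ∀ m, b m ≤ a m := by
    simp only [not_forall]
    exact exists_congr fun m => by cases a m <;> cases b m <;> decide
  simp only [Mpar, kroneckerPow, zetaBool, map_apply, of_apply, Matrix.sub_apply, prod_boole,
    mem_univ, true_imp_iff, h]
  split_ifs <;> simp

theorem mk_entrySum_Mpar_pow (k : ℕ) :
    (mk fun m => if m = 0 then 0 else ((∑ a, ∑ b, (Mpar k ^ (m - 1)) a b : ℕ) : ℤ)) =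
      X * entrySumSeries ((Mpar k).map (Nat.cast : ℕ → ℤ)) := by
  ext (_ | p)
  · simp
  · rw [coeff_succ_X_mul, entrySumSeries, coeff_mk, coeff_mk, if_neg p.succ_ne_zero,
      Nat.add_sub_cancel, ← Nat.coe_castRingHom, ← Matrix.map_pow, entrySum_map]
    rfl

theorem one_add_X_mul_entrySumSeries_Mpar_mul (k : ℕ) :
    (1 + X * entrySumSeries ((Mpar k).map (Nat.cast : ℕ → ℤ))) *
      mk (fun n => (-1) ^ n * ((n : ℤ) + 1) ^ k) = 1 := by
  have h : mk (fun n => (-1) ^ n * ((n : ℤ) + 1) ^ k) =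
      1 - X * entrySumSeries (-kroneckerPow (Fin k) (zetaBool ℤ)) := by
    ext (_ | n)
    · simp
    · simp [coeff_succ_X_mul, entrySumSeries, entrySum_neg_kroneckerPow_zetaBool_pow]
      ring
  rw [h, Mpar_map_cast]
  exact one_add_X_mul_entrySumSeries_sub_mul _

theorem Tuple.sort_eq_iff_forall_succ {α : Type*} [LinearOrder α] {m : ℕ} {f : Fin (m + 1) → α}
    {σ : Equiv.Perm (Fin (m + 1))} :
    Tuple.sort f = σ ↔ ∀ i : Fin m, f (σ i.castSucc) ≤ f (σ i.succ) ∧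
      (σ i.succ < σ i.castSucc → f (σ i.castSucc) < f (σ i.succ)) := by
  rw [eq_comm, Tuple.eq_sort_iff', Fin.strictMono_iff_lt_succ]
  refine forall_congr' fun i => ?_
  have hne : σ i.castSucc ≠ σ i.succ := σ.injective.ne Fin.castSucc_lt_succ.ne
  change toLex (f (σ i.castSucc), σ i.castSucc) < toLex (f (σ i.succ), σ i.succ) ↔ _
  rw [Prod.Lex.toLex_lt_toLex]
  grind

section Descents

variable {m : ℕ}

def descents (σ : Equiv.Perm (Fin (m + 1))) : Finset (Fin m) :=
  {i | σ i.succ < σ i.castSucc}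

theorem descentCount_eq_card_descents (σ : Equiv.Perm (Fin (m + 1))) :
    descentCount σ = #(descents σ) := by
  rw [descentCount, ← Nat.card_eq_finsetCard]
  exact Nat.card_congr
    { toFun i := ⟨⟨i, by obtain ⟨h, -⟩ := i.2; omega⟩, by
        obtain ⟨-, h⟩ := i.2
        simpa [descents] using h⟩
      invFun i := ⟨i.1.castSucc, Nat.succ_lt_succ i.1.2, (mem_filter.mp i.2).2⟩
      left_inv _ := rfl
      right_inv _ := rfl }

theorem descentCount_le (σ : Equiv.Perm (Fin (m + 1))) : descentCount σ ≤ m := by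
  simpa [descentCount_eq_card_descents] using (descents σ).card_le_univ

def MonotoneStrictAt {α : Type*} [Preorder α] (D : Finset (Fin m)) (g : Fin (m + 1) → α) : Prop :=
  ∀ i, g i.castSucc ≤ g i.succ ∧ (i ∈ D → g i.castSucc < g i.succ)

def sortFiberEquiv {α : Type*} [LinearOrder α] (σ : Equiv.Perm (Fin (m + 1))) :
    {f : Fin (m + 1) → α // Tuple.sort f = σ} ≃
      {g : Fin (m + 1) → α // MonotoneStrictAt (descents σ) g} :=
  (Equiv.arrowCongr σ.symm (Equiv.refl α)).subtypeEquiv fun f => by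
    simp [Tuple.sort_eq_iff_forall_succ, MonotoneStrictAt, descents]

variable (D : Finset (Fin m))

def ascentsBefore (i : Fin (m + 1)) : ℕ := #{j : Fin m | j ∉ D ∧ j.castSucc < i}

theorem ascentsBefore_zero : ascentsBefore D 0 = 0 := by
  simp [ascentsBefore]

theorem ascentsBefore_succ (i : Fin m) :
    ascentsBefore D i.succ = ascentsBefore D i.castSucc + if i ∈ D then 0 else 1 := by
  simp only [ascentsBefore, card_filter]
  rw [show (if i ∈ D then 0 else 1) = ∑ j, if j = i then (if j ∈ D then 0 else 1) else 0 by simp,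
    ← sum_add_distrib]
  refine sum_congr rfl fun j _ => ?_
  rcases lt_trichotomy j i with h | rfl | h
  · simp [h, h.le, h.ne]
  · simp
  · simp [not_le.mpr h, not_lt.mpr h.le, h.ne']

theorem ascentsBefore_last : ascentsBefore D (Fin.last m) = m - #D := by
  rw [show m - #D = #Dᶜ by rw [card_compl, Fintype.card_fin], ascentsBefore]
  congr 1
  ext j
  simp [Fin.castSucc_lt_last]

theorem ascentsBefore_le (i : Fin (m + 1)) : ascentsBefore D i ≤ m - #D := by
  rw [← ascentsBefore_last]
  exact card_le_card fun j hj => by simp_all [Fin.castSucc_lt_last]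

theorem monotone_sub_ascentsBefore {z : Fin (m + 1) → ℕ} (hz : StrictMono z) :
    Monotone fun i => (z i : ℤ) - ascentsBefore D i := by
  refine Fin.monotone_iff_le_succ.mpr fun i => ?_
  have := hz (Fin.castSucc_lt_succ (i := i))
  rw [ascentsBefore_succ]
  split_ifs <;> omega

variable {n : ℕ}

theorem ascentsBefore_le_and_sub_le (z : Fin (m + 1) ↪o Fin (n + 1 + (m - #D))) (i : Fin (m + 1)) :
    ascentsBefore D i ≤ z i ∧ z i - ascentsBefore D i ≤ n := by
  have hmono := monotone_sub_ascentsBefore D (Fin.val_strictMono.comp z.strictMono)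
  have h0 := hmono (Fin.zero_le i)
  have hlast := hmono (Fin.le_last i)
  have := (z (Fin.last m)).2
  simp only [Function.comp_apply, ascentsBefore_zero, ascentsBefore_last] at h0 hlast
  omega

def monotoneStrictAtEquiv :
    {g : Fin (m + 1) → Fin (n + 1) // MonotoneStrictAt D g} ≃
      (Fin (m + 1) ↪o Fin (n + 1 + (m - #D))) where
  toFun g := OrderEmbedding.ofStrictMono
    (fun i => ⟨g.1 i + ascentsBefore D i, by
      have := (g.1 i).2
      have := ascentsBefore_le D i
      omega⟩)
    (Fin.strictMono_iff_lt_succ.mpr fun i => by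
      obtain ⟨hle, hlt⟩ := g.2 i
      simp only [Fin.lt_def, Fin.le_def, ascentsBefore_succ] at hle hlt ⊢
      split_ifs with hi
      · have := hlt hi
        omega
      · omega)
  invFun z := ⟨fun i => ⟨z i - ascentsBefore D i, by
      have := ascentsBefore_le_and_sub_le D z i
      omega⟩, fun i => by
      have hz := Fin.lt_def.mp (z.strictMono (Fin.castSucc_lt_succ (i := i)))
      have hs := (ascentsBefore_le_and_sub_le D z i.castSucc).1
      simp only [Fin.lt_def, Fin.le_def, ascentsBefore_succ]
      split_ifs with hi
      · exact ⟨by omega, fun _ => by omega⟩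
      · exact ⟨by omega, fun h => absurd h hi⟩⟩
  left_inv g := by
    ext i
    simp
  right_inv z := by
    ext i
    have := (ascentsBefore_le_and_sub_le D z i).1
    simp only [OrderEmbedding.coe_ofStrictMono]
    omega

theorem card_monotoneStrictAt :
    Nat.card {g : Fin (m + 1) → Fin (n + 1) // MonotoneStrictAt D g} =
      (n + 1 + (m - #D)).choose (m + 1) := by
  rw [Nat.card_congr ((monotoneStrictAtEquiv D).trans Set.powersetCard.ofFinEmbEquiv),
    Set.powersetCard.card, Nat.card_eq_fintype_card, Fintype.card_fin]

theorem card_sort_eq (σ : Equiv.Perm (Fin (m + 1))) :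
    Nat.card {f : Fin (m + 1) → Fin (n + 1) // Tuple.sort f = σ} =
      (n + (m + 1) - descentCount σ).choose (m + 1) := by
  have := descentCount_le σ
  rw [Nat.card_congr (sortFiberEquiv σ), card_monotoneStrictAt, ← descentCount_eq_card_descents]
  congr 1
  omega

end Descents

theorem sum_eulerian_mul_choose {k : ℕ} (hk : 1 ≤ k) (n : ℕ) :
    ∑ j ∈ range k, eulerian k j * (n + k - j).choose k = (n + 1) ^ k := by
  obtain ⟨m, rfl⟩ := Nat.exists_eq_add_of_le' hk
  have hdes (σ : Equiv.Perm (Fin (m + 1))) : descentCount σ ∈ range (m + 1) :=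
    mem_range.mpr (Nat.lt_succ_of_le (descentCount_le σ))
  calc ∑ j ∈ range (m + 1), eulerian (m + 1) j * (n + (m + 1) - j).choose (m + 1)
      = ∑ σ : Equiv.Perm (Fin (m + 1)), (n + (m + 1) - descentCount σ).choose (m + 1) := by
        rw [← sum_fiberwise_of_maps_to fun σ _ => hdes σ]
        refine sum_congr rfl fun j _ => ?_
        rw [eulerian, Nat.card_eq_fintype_card, Fintype.card_subtype, ← smul_eq_mul, ← sum_const]
        exact sum_congr rfl fun σ hσ => by rw [(mem_filter.mp hσ).2]
    _ = ∑ σ, Nat.card {f : Fin (m + 1) → Fin (n + 1) // Tuple.sort f = σ} := by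
        simp only [card_sort_eq]
    _ = (n + 1) ^ (m + 1) := by
        rw [← Nat.card_sigma, Nat.card_congr (Equiv.sigmaFiberEquiv _)]
        simp

theorem PowerSeries.rescale_C_mul_X_pow {R : Type*} [CommSemiring R] (a b : R) (j : ℕ) :
    rescale a (C b * X ^ j) = C (a ^ j * b) * X ^ j := by
  ext n
  simp only [coeff_rescale, coeff_C_mul_X_pow]
  split_ifs with h
  · rw [h]
  · rw [mul_zero]

theorem sum_eulerian_mul_mk_choose {k : ℕ} (hk : 1 ≤ k) :
    (∑ j ∈ range k, C (eulerian k j : ℤ) * X ^ j) * mk (fun n => ((k + n).choose k : ℤ)) =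
      mk fun n => ((n + 1 : ℤ) ^ k) := by
  ext n
  simp only [sum_mul, map_sum, mul_assoc, coeff_C_mul, coeff_X_pow_mul', coeff_mk]
  rw [← Nat.cast_add_one, ← Nat.cast_pow, ← sum_eulerian_mul_choose hk n, Nat.cast_sum]
  refine sum_congr rfl fun j _ => ?_
  split_ifs with h
  · push_cast
    congr 3
    omega
  · rw [Nat.choose_eq_zero_of_lt (by omega)]
    simp

theorem sum_neg_one_pow_eulerian {k : ℕ} (hk : 1 ≤ k) :
    ∑ j ∈ range k, C ((-1) ^ j * (eulerian k j : ℤ)) * X ^ j =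
      mk (fun n => (-1) ^ n * ((n : ℤ) + 1) ^ k) * (1 + X) ^ (k + 1) := by
  have h : ∑ j ∈ range k, C (eulerian k j : ℤ) * X ^ j =
      (mk fun n => ((n + 1 : ℤ) ^ k)) * (1 - X) ^ (k + 1) := by
    rw [← sum_eulerian_mul_mk_choose hk, mul_assoc, mk_add_choose_mul_one_sub_pow_eq_one, mul_one]
  have h' := congrArg (rescale (-1 : ℤ)) h
  rw [map_sum, map_mul] at h'
  simpa only [rescale_C_mul_X_pow, rescale_mk, map_pow, map_sub, map_one, rescale_neg_one_X,
    sub_neg_eq_add] using h'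

/-- Writing `S_p` for the total sum of the entries of `(M_k^∥)^p`, in `ℤ⟦t⟧`
one has `(1 + ∑_{p ≥ 0} S_p t^(p+1)) * (∑_{j=0}^{k-1} (-1)^j A(k,j) t^(j+1))
= t (1 + t)^(k+1)`, i.e. the generating series `R_k` of the sums `S_p`
satisfies `R_k(t) · E_k(-t) = -t (1+t)^(k+1)`. -/
theorem generatingSeries_Mpar (k : ℕ) (hk : 1 ≤ k) :
    ((1 : PowerSeries ℤ) +
        PowerSeries.mk fun m =>
          if m = 0 then 0 else ((∑ a, ∑ b, (Mpar k ^ (m - 1)) a b : ℕ) : ℤ)) *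
      (∑ j ∈ Finset.range k,
        PowerSeries.C ((-1) ^ j * (eulerian k j : ℤ)) * PowerSeries.X ^ (j + 1))
    = PowerSeries.X * (1 + PowerSeries.X) ^ (k + 1) := by
  have hE : ∑ j ∈ range k, C ((-1) ^ j * (eulerian k j : ℤ)) * X ^ (j + 1) =
      X * (mk (fun n => (-1) ^ n * ((n : ℤ) + 1) ^ k) * (1 + X) ^ (k + 1)) := by
    rw [← sum_neg_one_pow_eulerian hk, mul_sum]
    exact sum_congr rfl fun j _ => by ring
  rw [mk_entrySum_Mpar_pow, hE]
  linear_combination (X * (1 + X) ^ (k + 1)) * one_add_X_mul_entrySumSeries_Mpar_mul k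
end

section
/- Define d : ℕ → ℕ by d(0) = 1 and, for p ≥ 1, d(p) = Σ_{a,b,c ≥ 0, a+b+c = p−1} d(a)·d(b)·d(c) + Σ_{a,b ≥ 1, a+b = p} d(a)·d(b). Then for every p ≥ 1, p · d(p) = Σ_{i=0}^{p−1} binom(3p, i) · binom(2p−i−2, p−i−1). (This sequence d(p) is the sequence of dimensions of the homogeneous components of the quadri-algebra operad of Aguiar and Loday, and the identity establishes their Conjecture 4.2.) -/
/-!
Let `D = ∑ d p X^p` and `E = D - 1`. The recursion says `D = 1 + X D^3 + E^2`, i.e.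
`E (1 - E) = X (1 + E)^3`, so `E = X φ(E)` with `φ(t) = (1 + t)^3 / (1 - t)`. Lagrange inversion
then gives `p d p = [t^(p-1)] φ^p = [t^(p-1)] (1 + t)^(3p) (1 - t)^(-p)`, and expanding the two
binomial series yields the sum.
-/

open PowerSeries Finset

namespace PowerSeries

variable {R : Type*} [CommRing R]

theorem coeff_mul_eq_sum_range (f g : R⟦X⟧) (n : ℕ) :
    coeff n (f * g) = ∑ a ∈ range (n + 1), coeff a f * coeff (n - a) g := by
  rw [coeff_mul, Nat.sum_antidiagonal_eq_sum_range_succ_mk]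

theorem coeff_pow_eq_zero_of_lt {E : R⟦X⟧} (hE : constantCoeff E = 0) {m n : ℕ} (h : n < m) :
    coeff n (E ^ m) = 0 :=
  coeff_of_lt_order n <| (Nat.cast_lt.mpr h).trans_le (le_order_pow_of_constantCoeff_eq_zero m hE)

theorem coeff_subst_eq_sum_range {E : R⟦X⟧} (hE : constantCoeff E = 0) (φ : R⟦X⟧)
    {n N : ℕ} (h : n < N) :
    coeff n (φ.subst E : R⟦X⟧) = ∑ m ∈ range N, coeff m φ * coeff n (E ^ m) := by
  rw [coeff_subst' (HasSubst.of_constantCoeff_zero' hE)]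
  refine finsum_eq_sum_of_support_subset _ fun m hm => ?_
  rw [mem_coe, mem_range]
  by_contra! hNm
  exact hm (by simp [coeff_pow_eq_zero_of_lt hE (show n < m by omega)])

theorem coeff_X_mul_derivative (f : R⟦X⟧) (n : ℕ) :
    coeff n (X * d⁄dX R f) = n * coeff n f := by
  rcases n with _ | n
  · simp
  · rw [coeff_succ_X_mul, coeff_derivative]
    push_cast
    ring

theorem coeff_X_mul_derivative_mul (f g : R⟦X⟧) (n : ℕ) :
    coeff n (X * d⁄dX R f * g) = ∑ m ∈ range (n + 1), (m : R) * coeff m f * coeff (n - m) g := by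
  rw [coeff_mul_eq_sum_range]
  simp only [coeff_X_mul_derivative]

theorem natCast_add_mul_X_mul_derivative_pow_mul_pow (φ : R⟦X⟧) (k n : ℕ) :
    ((k : R⟦X⟧) + (n : R⟦X⟧)) * (X * d⁄dX R (φ ^ k) * φ ^ n) =
      (k : R⟦X⟧) * (X * d⁄dX R (φ ^ (k + n))) := by
  rcases k with _ | k
  · simp
  · rw [derivative_pow, derivative_pow, show k + 1 + n - 1 = k + n by omega,
      Nat.add_sub_cancel, pow_add]
    push_cast
    ring

theorem coeff_add_pow_of_eq_X_mul_subst {E φ : R⟦X⟧} (h : E = X * φ.subst E) (k n : ℕ) :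
    coeff (k + n) (E ^ k) = ∑ m ∈ range (n + 1), coeff m (φ ^ k) * coeff n (E ^ m) := by
  have hE : constantCoeff E = 0 := by rw [h, map_mul, constantCoeff_X, zero_mul]
  have hEk : E ^ k = X ^ k * (φ ^ k).subst E := by
    rw [subst_pow (HasSubst.of_constantCoeff_zero' hE), ← mul_pow, ← h]
  rw [hEk, add_comm, coeff_X_pow_mul, coeff_subst_eq_sum_range hE _ (Nat.lt_succ_self n)]

/-- Proved by strong induction on `p`: comparing coefficients in `E^k = X^k φ(E)^k` and using the
induction hypothesis turns `n [X^(k+n)] E^k` into `[t^n] (t (φ^k)' φ^n)`, and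
`(k + n) (φ^k)' φ^n = k (φ^(k+n))'`. -/
theorem lagrange_inversion {K : Type*} [Field K] [CharZero K] {E φ : K⟦X⟧}
    (h : E = X * φ.subst E) {k p : ℕ} (hkp : k ≤ p) :
    (p : K) * coeff p (E ^ k) = k * coeff (p - k) (φ ^ p) := by
  induction p using Nat.strong_induction_on generalizing k with | _ p ih =>
  obtain ⟨n, rfl⟩ := Nat.exists_eq_add_of_le hkp
  rcases Nat.eq_zero_or_pos k with rfl | hk
  · simp [coeff_one]
  rcases Nat.eq_zero_or_pos n with rfl | hn
  · rw [coeff_add_pow_of_eq_X_mul_subst h k 0]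
    simp
  have hsum : (n : K) * coeff (k + n) (E ^ k) = coeff n (X * d⁄dX K (φ ^ k) * φ ^ n) := by
    rw [coeff_add_pow_of_eq_X_mul_subst h, coeff_X_mul_derivative_mul, mul_sum]
    refine sum_congr rfl fun m hm => ?_
    rw [mul_left_comm, ih n (by omega) (mem_range_succ_iff.mp hm)]
    ring
  have hderiv := congrArg (coeff n) (natCast_add_mul_X_mul_derivative_pow_mul_pow φ k n)
  simp only [← map_natCast (C (R := K)), ← map_add, coeff_C_mul, coeff_X_mul_derivative] at hderiv
  apply mul_left_cancel₀ (Nat.cast_ne_zero.mpr hn.ne' : (n : K) ≠ 0)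
  rw [Nat.add_sub_cancel_left]
  push_cast
  linear_combination ((k : K) + n) * hsum + hderiv

theorem coeff_one_add_X_pow (N n : ℕ) : coeff n ((1 + X : R⟦X⟧) ^ N) = N.choose n := by
  have : (1 + X : R⟦X⟧) ^ N = ((1 + Polynomial.X) ^ N : Polynomial R) := by simp
  rw [this, Polynomial.coeff_coe, Polynomial.coeff_one_add_X_pow]

theorem subst_mk_one_mul_one_sub {E : R⟦X⟧} (hE : constantCoeff E = 0) :
    (mk 1 : R⟦X⟧).subst E * (1 - E) = 1 := by
  have hsubst := congrArg (subst E) (mk_one_mul_one_sub_eq_one R)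
  have hE' := HasSubst.of_constantCoeff_zero' hE
  rwa [← coe_substAlgHom hE', map_mul, map_sub, map_one, substAlgHom_X,
    coe_substAlgHom] at hsubst

end PowerSeries

namespace QuadriAlgebra

variable {R : Type*} [CommRing R]

noncomputable def genFun (d : ℕ → ℕ) : R⟦X⟧ := PowerSeries.mk fun n => (d n : R)

/-- `(1 + X) ^ 3 / (1 - X)`, as `mk 1 = (1 - X)⁻¹`. -/
noncomputable def phi : R⟦X⟧ := (1 + X) ^ 3 * PowerSeries.mk 1

theorem coeff_genFun_pow_three (d : ℕ → ℕ) (q : ℕ) :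
    coeff q ((genFun d : R⟦X⟧) ^ 3) = ∑ a ∈ range (q + 1), ∑ b ∈ range (q + 1 - a),
      (d a * d b * d (q - a - b) : R) := by
  rw [pow_three, coeff_mul_eq_sum_range]
  refine sum_congr rfl fun a ha => ?_
  rw [coeff_mul_eq_sum_range, mul_sum, show q - a + 1 = q + 1 - a by
    have := mem_range_succ_iff.mp ha; omega]
  simp only [genFun, coeff_mk, mul_assoc, Nat.sub_sub]

theorem coeff_genFun_sub_one_sq (d : ℕ → ℕ) (h0 : d 0 = 1) (q : ℕ) :
    coeff (q + 1) ((genFun d - 1 : R⟦X⟧) ^ 2) =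
      ∑ a ∈ Icc 1 q, (d a * d (q + 1 - a) : R) := by
  have hcoeff : ∀ a, coeff a (genFun d - 1 : R⟦X⟧) = if a = 0 then 0 else (d a : R) := by
    rintro (_ | a) <;> simp [genFun, h0]
  rw [sq, coeff_mul_eq_sum_range, ← sum_subset (s₁ := Icc 1 q)
    (fun a ha => by simp at ha ⊢; omega)]
  · refine sum_congr rfl fun a ha => ?_
    rw [mem_Icc] at ha
    rw [hcoeff, hcoeff, if_neg (by omega), if_neg (by omega)]
  · intro a ha ha'
    obtain rfl | rfl : a = 0 ∨ a = q + 1 := by simp at ha ha'; omega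
    all_goals simp [hcoeff]

def QuadriRecursion (d : ℕ → ℕ) : Prop :=
  ∀ p : ℕ, 1 ≤ p → d p =
    (∑ a ∈ range p, ∑ b ∈ range (p - a), d a * d b * d (p - 1 - a - b)) +
    ∑ a ∈ Icc 1 (p - 1), d a * d (p - a)

theorem genFun_eq (d : ℕ → ℕ) (h0 : d 0 = 1) (hrec : QuadriRecursion d) :
    (genFun d : R⟦X⟧) = 1 + X * genFun d ^ 3 + (genFun d - 1) ^ 2 := by
  ext (_ | q)
  · simp [genFun, h0]
  · rw [map_add, map_add, coeff_succ_X_mul, coeff_genFun_pow_three, coeff_genFun_sub_one_sq d h0,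
      coeff_one, if_neg q.succ_ne_zero, genFun, coeff_mk, hrec (q + 1) q.succ_pos]
    simp

theorem genFun_sub_one_eq_X_mul_subst (d : ℕ → ℕ) (h0 : d 0 = 1) (hrec : QuadriRecursion d) :
    (genFun d - 1 : R⟦X⟧) = X * (phi : R⟦X⟧).subst (genFun d - 1 : R⟦X⟧) := by
  set E : R⟦X⟧ := genFun d - 1
  have hE : constantCoeff E = 0 := by simp [E, genFun, h0]
  have hE' := HasSubst.of_constantCoeff_zero' hE
  have hquad : E * (1 - E) = X * (1 + E) ^ 3 := by
    linear_combination genFun_eq (R := R) d h0 hrec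
  rw [phi, ← coe_substAlgHom hE', map_mul, map_pow, map_add, map_one, substAlgHom_X,
    coe_substAlgHom]
  linear_combination (-E) * subst_mk_one_mul_one_sub hE + (PowerSeries.mk 1 : R⟦X⟧).subst E * hquad

theorem coeff_phi_pow (p : ℕ) :
    coeff p ((phi : R⟦X⟧) ^ (p + 1)) = ∑ i ∈ range (p + 1),
      ((3 * (p + 1)).choose i * (2 * (p + 1) - i - 2).choose (p + 1 - i - 1) : R) := by
  rw [phi, mul_pow, ← pow_mul, mk_one_pow_eq_mk_choose_add, coeff_mul_eq_sum_range]
  refine sum_congr rfl fun i hi => ?_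
  have hi := mem_range_succ_iff.mp hi
  rw [coeff_one_add_X_pow, coeff_mk, mul_comm 3, Nat.choose_symm_add,
    show 2 * (p + 1) - i - 2 = p + (p - i) by omega, show p + 1 - i - 1 = p - i by omega]

end QuadriAlgebra

/-- Let `d : ℕ → ℕ` satisfy `d 0 = 1` and, for `p ≥ 1`,
`d p = ∑_{a+b+c = p-1} d a * d b * d c + ∑_{a,b ≥ 1, a+b = p} d a * d b`
(the recursion for the dimensions of the homogeneous components of the
quadri-algebra operad). Then for every `p ≥ 1`,
`p * d p = ∑_{i=0}^{p-1} binom (3p) i * binom (2p-i-2) (p-i-1)`,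
which is Aguiar–Loday's Conjecture 4.2. -/
theorem quadri_dimension_formula (d : ℕ → ℕ) (h0 : d 0 = 1)
    (hrec : ∀ p : ℕ, 1 ≤ p → d p =
      (∑ a ∈ Finset.range p, ∑ b ∈ Finset.range (p - a),
        d a * d b * d (p - 1 - a - b)) +
      ∑ a ∈ Finset.Icc 1 (p - 1), d a * d (p - a)) :
    ∀ p : ℕ, 1 ≤ p → p * d p =
      ∑ i ∈ Finset.range p,
        Nat.choose (3 * p) i * Nat.choose (2 * p - i - 2) (p - i - 1) := by
  intro p hp
  obtain ⟨p, rfl⟩ := Nat.exists_eq_add_of_le' hp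
  have hlagrange := lagrange_inversion
    (QuadriAlgebra.genFun_sub_one_eq_X_mul_subst (R := ℚ) d h0 hrec) (Nat.le_add_left 1 p)
  rw [pow_one, Nat.cast_one, one_mul, Nat.add_sub_cancel, QuadriAlgebra.coeff_phi_pow, map_sub,
    coeff_one, if_neg p.succ_ne_zero, sub_zero, QuadriAlgebra.genFun, coeff_mk] at hlagrange
  exact_mod_cast hlagrange
end

section
/- Let H ∈ ℚ[[t]] be the formal power series with constant coefficient 0 whose n-th coefficient equals binom(3n−2, n−1)/n for every n ≥ 1 (so H = t + 2t² + 7t³ + 30t⁴ + 143t⁵ + ⋯). Then H³ − 2H² + H = t; in other words, H is the solution of the form t + O(t²) of the algebraic equation H³ − 2H² + H − t = 0, whose coefficients give the Hilbert series of the operad of L-algebras (the 1-poset operad). -/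
/-!
The coefficients `aₙ = binom(3n-2, n-1)/n` satisfy `2(n+1)(2n+1) aₙ₊₁ = (27n² - 3) aₙ`, i.e. `H`
solves the linear differential equation `(4t - 27t²) H'' + (2 - 27t) H' + 3H = 2`. Substituting this
equation into the derivatives of the defect `E = H³ - 2H² + H - t` gives a second order equation
`t F E'' = A E' + B E` with `F(0) = 4` and `A(0) = -2`. In it the coefficient of `tᵏ` determines
`(4k + 2)(k + 1) eₖ₊₁` from `e₀, …, eₖ`, so `E(0) = 0` forces `E = 0`.
-/

open PowerSeries

theorem Nat.choose_recurrence (m : ℕ) :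
    2 * (2 * m + 3) * (m + 1) * (3 * m + 4).choose (m + 1)
      = 3 * (3 * m + 2) * (3 * m + 4) * (3 * m + 1).choose m := by
  have h₄ : (3 * m + 4) * (3 * m + 3).choose m = (3 * m + 4).choose (m + 1) * (m + 1) :=
    Nat.add_one_mul_choose_eq (3 * m + 3) m
  have h₃ : (3 * m + 2).choose m * (3 * m + 3) = (3 * m + 3).choose m * (2 * m + 3) := by
    rw [Nat.choose_mul_succ_eq]; congr 2; omega
  have h₂ : (3 * m + 1).choose m * (3 * m + 2) = (3 * m + 2).choose m * (2 * m + 2) := by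
    rw [Nat.choose_mul_succ_eq]; congr 2; omega
  linear_combination 2 * (2 * m + 3) * h₄.symm + 2 * (3 * m + 4) * h₃.symm +
    3 * (3 * m + 4) * h₂.symm

def lAlgebraCoeff (n : ℕ) : ℚ := (Nat.choose (3 * n - 2) (n - 1) : ℚ) / n

theorem lAlgebraCoeff_succ {n : ℕ} (hn : 1 ≤ n) :
    2 * (n + 1) * (2 * n + 1) * lAlgebraCoeff (n + 1) = (27 * n ^ 2 - 3) * lAlgebraCoeff n := by
  obtain ⟨m, rfl⟩ := Nat.exists_eq_add_of_le' hn
  have key : (2 * (2 * m + 3) * (m + 1) * (3 * m + 4).choose (m + 1) : ℚ)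
      = 3 * (3 * m + 2) * (3 * m + 4) * (3 * m + 1).choose m := by
    exact_mod_cast Nat.choose_recurrence m
  simp only [lAlgebraCoeff, show 3 * (m + 1 + 1) - 2 = 3 * m + 4 by omega,
    show 3 * (m + 1) - 2 = 3 * m + 1 by omega, Nat.add_sub_cancel]
  push_cast
  field_simp
  linear_combination key

/-- Multiplying the differential equation by `w³`, where `w = P'(h)` for `P(u) = u(1 - u)²`, and
substituting `w h₁ = e₁ + 1`, `w h₂ = e₂ - P''(h) h₁²` leaves a polynomial in `h` and `x` that vanishes
at `x = P(h)` (the inverse series of `P` solves the equation), hence is a multiple of `e`. -/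
theorem cubic_defect_ode {R : Type*} [CommRing R] {x h h₁ h₂ e e₁ e₂ : R}
    (hode : (4 * x - 27 * x ^ 2) * h₂ + (2 - 27 * x) * h₁ + 3 * h = 2)
    (he : e = h ^ 3 - 2 * h ^ 2 + h - x) (he₁ : e₁ = (3 * h ^ 2 - 4 * h + 1) * h₁ - 1)
    (he₂ : e₂ = (3 * h ^ 2 - 4 * h + 1) * h₂ + (6 * h - 4) * h₁ ^ 2) :
    x * ((4 - 27 * x) * (3 * h ^ 2 - 4 * h + 1) ^ 2 * e₂)
      = ((4 * x - 27 * x ^ 2) * (6 * h - 4) * (e₁ + 2)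
          - (2 - 27 * x) * (3 * h ^ 2 - 4 * h + 1) ^ 2) * e₁
        + ((27 * (x + (h ^ 3 - 2 * h ^ 2 + h)) - 4) * (6 * h - 4)
          - 27 * (3 * h ^ 2 - 4 * h + 1) ^ 2) * e := by
  subst he he₁ he₂
  linear_combination (3 * h ^ 2 - 4 * h + 1) ^ 3 * hode

namespace PowerSeries

section CommRing

variable {R : Type*} [CommRing R]

@[simp]
theorem derivative_ofNat (n : ℕ) [n.AtLeastTwo] : d⁄dX R (ofNat(n) : R⟦X⟧) = 0 := by
  rw [← Nat.cast_ofNat]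
  exact (d⁄dX R).map_natCast n

theorem coeff_mul_eq_constantCoeff_mul {F G : R⟦X⟧} {n : ℕ} (hG : ∀ i < n, coeff i G = 0) :
    coeff n (F * G) = constantCoeff F * coeff n G := by
  obtain ⟨Q, rfl⟩ := X_pow_dvd_iff.mpr hG
  rw [mul_left_comm, coeff_X_pow_mul', coeff_X_pow_mul', if_pos le_rfl, if_pos le_rfl,
    Nat.sub_self, coeff_zero_eq_constantCoeff, map_mul]

noncomputable def lAlgebraOperator (H : R⟦X⟧) : R⟦X⟧ :=
  (4 * X - 27 * X ^ 2) * d⁄dX R (d⁄dX R H) + (2 - 27 * X) * d⁄dX R H + 3 * H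

theorem coeff_lAlgebraOperator (H : R⟦X⟧) (n : ℕ) :
    coeff n (lAlgebraOperator H)
      = 2 * (n + 1) * (2 * n + 1) * coeff (n + 1) H - (27 * n ^ 2 - 3) * coeff n H := by
  have expand : lAlgebraOperator H = C 4 * (X * d⁄dX R (d⁄dX R H))
      - C 27 * (X * (X * d⁄dX R (d⁄dX R H))) + C 2 * d⁄dX R H - C 27 * (X * d⁄dX R H)
      + C 3 * H := by
    simp only [lAlgebraOperator, map_ofNat]
    ring
  rw [expand]
  rcases n with _ | _ | m <;>
  simp only [map_add, map_sub, coeff_C_mul, coeff_succ_X_mul, coeff_zero_X_mul,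
    coeff_derivative] <;> push_cast <;> ring

theorem derivative_cubic (H : R⟦X⟧) :
    d⁄dX R (H ^ 3 - 2 * H ^ 2 + H - X) = (3 * H ^ 2 - 4 * H + 1) * d⁄dX R H - 1 := by
  simp only [map_sub, map_add, Derivation.leibniz, Derivation.leibniz_pow, derivative_ofNat,
    derivative_X, smul_eq_mul, nsmul_eq_mul]
  push_cast
  ring

theorem derivative_derivative_cubic (H : R⟦X⟧) :
    d⁄dX R (d⁄dX R (H ^ 3 - 2 * H ^ 2 + H - X))
      = (3 * H ^ 2 - 4 * H + 1) * d⁄dX R (d⁄dX R H) + (6 * H - 4) * d⁄dX R H ^ 2 := by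
  rw [derivative_cubic]
  simp only [map_sub, map_add, Derivation.leibniz, Derivation.leibniz_pow, derivative_ofNat,
    Derivation.map_one_eq_zero, smul_eq_mul, nsmul_eq_mul]
  push_cast
  ring

end CommRing

theorem eq_zero_of_X_mul_derivative_derivative {K : Type*} [Field K] [CharZero K]
    {E F A B : K⟦X⟧} (hE : constantCoeff E = 0)
    (hFA : ∀ k : ℕ, (k : K) * constantCoeff F ≠ constantCoeff A)
    (h : X * (F * d⁄dX K (d⁄dX K E)) = A * d⁄dX K E + B * E) : E = 0 := by
  ext n
  rw [map_zero]
  induction n using Nat.strong_induction_on with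
  | _ n ih =>
  rcases n with _ | k
  · simpa using hE
  have hB : coeff k (B * E) = 0 :=
    coeff_mul_of_lt_order ((ENat.natCast_lt_natCast.mpr k.lt_succ_self).trans_le
      (nat_le_order E (k + 1) ih))
  have hA : coeff k (A * d⁄dX K E) = constantCoeff A * ((k + 1) * coeff (k + 1) E) := by
    rw [coeff_mul_eq_constantCoeff_mul fun i hi => by
      rw [coeff_derivative, ih (i + 1) (by omega), zero_mul], coeff_derivative,
      mul_comm (coeff _ E)]
  have hX : coeff k (X * (F * d⁄dX K (d⁄dX K E)))
      = k * constantCoeff F * ((k + 1) * coeff (k + 1) E) := by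
    rcases k with _ | j
    · simp
    rw [coeff_succ_X_mul, coeff_mul_eq_constantCoeff_mul fun i hi => by
      rw [coeff_derivative, coeff_derivative, ih (i + 2) (by omega), zero_mul, zero_mul],
      coeff_derivative, coeff_derivative]
    push_cast
    ring
  have hk := congrArg (coeff k) h
  rw [map_add, hA, hB, hX, add_zero, ← sub_eq_zero, ← sub_mul] at hk
  simpa [sub_eq_zero, hFA k, Nat.cast_add_one_ne_zero] using hk

theorem lAlgebraOperator_eq_two {H : ℚ⟦X⟧} (h0 : coeff 0 H = 0)
    (hn : ∀ n : ℕ, 1 ≤ n → coeff n H = lAlgebraCoeff n) : lAlgebraOperator H = 2 := by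
  ext n
  rw [coeff_lAlgebraOperator]
  rcases n with _ | n
  · simp [h0, hn 1 le_rfl, lAlgebraCoeff, map_ofNat]
  · rw [hn n.succ (by omega), hn (n + 1 + 1) (by omega), ← map_ofNat C, coeff_C,
      if_neg n.succ_ne_zero, sub_eq_zero]
    exact_mod_cast lAlgebraCoeff_succ (Nat.le_add_left 1 n)

end PowerSeries

/-- Let `H ∈ ℚ⟦t⟧` have constant coefficient `0` and `n`-th coefficient
`binom (3n-2) (n-1) / n` for every `n ≥ 1` (so
`H = t + 2t² + 7t³ + 30t⁴ + 143t⁵ + ⋯`). Then `H³ - 2H² + H = t`: `H` is the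
solution of the form `t + O(t²)` of `H³ - 2H² + H - t = 0`, whose coefficients
give the Hilbert series of the operad of L-algebras (the 1-poset operad). -/
theorem LAlgebra_hilbert_series (H : PowerSeries ℚ)
    (h0 : PowerSeries.coeff 0 H = 0)
    (hn : ∀ n : ℕ, 1 ≤ n →
      PowerSeries.coeff n H = (Nat.choose (3 * n - 2) (n - 1) : ℚ) / n) :
    H ^ 3 - 2 * H ^ 2 + H = PowerSeries.X := by
  have hc : constantCoeff H = 0 := by rwa [← coeff_zero_eq_constantCoeff]
  have defect_ode := cubic_defect_ode (lAlgebraOperator_eq_two h0 hn) rfl (derivative_cubic H)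
    (derivative_derivative_cubic H)
  refine sub_eq_zero.mp (eq_zero_of_X_mul_derivative_derivative ?_ ?_ defect_ode)
  · simp [hc]
  · intro k
    simp only [map_add, map_sub, map_mul, map_pow, map_one, map_ofNat, constantCoeff_X, hc]
    norm_num
    intro hk
    linarith [k.cast_nonneg (α := ℚ)]
end

section
/- Fix an integer k ≥ 1 and let a ∈ {1,2}^k be a destination vector of arity 2. Then: (1) for the parallel composition, a ∘∥_1 a = a ∘∥_2 a, so that every operation of {l,r}^k is associative in the messy parallel k-signaletic operad; (2) for the series composition, a ∘⊢_1 a = a ∘⊢_2 a if and only if a is constant, so that among the operations of {l,r}^k exactly the two operations l^k and r^k are associative in the messy series k-signaletic operad. -/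
/-- `cnt x i j` is the number of coordinates `ℓ ≤ j` (0-indexed) with
`x ℓ = i`. -/
def cnt (x : ℕ → ℕ) (i j : ℕ) : ℕ :=
  ((Finset.range (j + 1)).filter fun l => x l = i).card

/-- Parallel composition of destination vectors (coordinatewise, `q` is the
arity of `y`): `(x ∘∥_i y)_j = x_j` if `x_j < i`, `= x_j + y_j - 1` if
`x_j = i`, and `= x_j + q - 1` if `x_j > i`. -/
def parComp (q i : ℕ) (x y : ℕ → ℕ) : ℕ → ℕ := fun j =>
  if x j < i then x j
  else if x j = i then x j + y j - 1
  else x j + q - 1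

/-- Series composition of destination vectors (coordinatewise, `q` is the
arity of `y`): `(x ∘⊢_i y)_j = x_j` if `x_j < i`, `= x_j + y_{c_j} - 1` if
`x_j = i` where `c_j = #{ℓ ≤ j : x_ℓ = i}` (with `y` 0-indexed, so
`y_{c_j} = y (c_j - 1)`), and `= x_j + q - 1` if `x_j > i`. -/
def serComp (q i : ℕ) (x y : ℕ → ℕ) : ℕ → ℕ := fun j =>
  if x j < i then x j
  else if x j = i then x j + y (cnt x i j - 1) - 1
  else x j + q - 1

lemma cnt_first (x : ℕ → ℕ) (i j : ℕ) (h : ∀ l < j, x l ≠ i) (hj : x j = i) :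
    cnt x i j = 1 := by
  unfold cnt
  rw [Finset.card_eq_one]
  refine ⟨j, ?_⟩
  ext l
  simp only [Finset.mem_filter, Finset.mem_range, Nat.lt_succ_iff,
    Finset.mem_singleton]
  constructor
  · rintro ⟨hl, hxl⟩
    rcases lt_or_eq_of_le hl with h' | h'
    · exact absurd hxl (h l h')
    · exact h'
  · rintro rfl
    exact ⟨le_refl _, hj⟩

/-- Let `a` be a destination vector of arity `2` in `k` coordinates (that is,
`1 ≤ a j ≤ 2` for all `j < k`, the coordinates being 0-indexed). Then:
(1) for the parallel composition, `a ∘∥₁ a = a ∘∥₂ a`, so every operation of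
`{l, r}^k` is associative in the messy parallel `k`-signaletic operad;
(2) for the series composition, `a ∘⊢₁ a = a ∘⊢₂ a` if and only if `a` is
constant, so among the operations of `{l, r}^k` exactly `l^k` and `r^k` are
associative in the messy series `k`-signaletic operad. -/
theorem associative_destination_vectors (k : ℕ) (hk : 1 ≤ k) (a : ℕ → ℕ)
    (ha : ∀ j < k, 1 ≤ a j ∧ a j ≤ 2) :
    (∀ j < k, parComp 2 1 a a j = parComp 2 2 a a j) ∧
    ((∀ j < k, serComp 2 1 a a j = serComp 2 2 a a j) ↔
      ∀ j₁ < k, ∀ j₂ < k, a j₁ = a j₂) := by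
  constructor
  · intro j hj
    obtain ⟨h1, h2⟩ := ha j hj
    have h12 : a j = 1 ∨ a j = 2 := by omega
    rcases h12 with h | h <;> simp [parComp, h]
  constructor
  · intro hser j₁ hj₁ j₂ hj₂
    suffices H : ∀ j < k, a j = a 0 by rw [H j₁ hj₁, H j₂ hj₂]
    intro j hj
    induction j using Nat.strong_induction_on with
    | _ j ih =>
      by_contra hne
      have hall : ∀ l < j, a l = a 0 := fun l hl => ih l hl (hl.trans hj)
      obtain ⟨h01, h02⟩ := ha 0 (by omega)
      obtain ⟨hj1, hj2⟩ := ha j hj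
      have hs := hser j hj
      have h0 : a 0 = 1 ∨ a 0 = 2 := by omega
      have hjv : a j = 1 ∨ a j = 2 := by omega
      rcases h0 with h0 | h0 <;> rcases hjv with hjv | hjv
      · exact hne (hjv.trans h0.symm)
      · have hc : cnt a 2 j = 1 :=
          cnt_first a 2 j (fun l hl => by rw [hall l hl, h0]; omega) hjv
        simp [serComp, hjv, hc, h0] at hs
      · have hc : cnt a 1 j = 1 :=
          cnt_first a 1 j (fun l hl => by rw [hall l hl, h0]; omega) hjv
        simp [serComp, hjv, hc, h0] at hs
      · exact hne (hjv.trans h0.symm)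
  · intro hconst j hj
    obtain ⟨h1, h2⟩ := ha j hj
    have hcle : ∀ i, cnt a i j - 1 < k := by
      intro i
      have : cnt a i j ≤ j + 1 := by
        unfold cnt
        exact (Finset.card_filter_le _ _).trans (by simp)
      omega
    have h12 : a j = 1 ∨ a j = 2 := by omega
    rcases h12 with h | h
    · have hv : a (cnt a 1 j - 1) = 1 := by
        rw [← h]; exact hconst _ (by rw [h]; exact hcle 1) j hj
      simp [serComp, h, hv]
    · have hv : a (cnt a 2 j - 1) = 2 := by
        rw [← h]; exact hconst _ (by rw [h]; exact hcle 2) j hj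
      simp [serComp, h, hv]
end
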